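/- arXiv:1304.7186 — 6 statements merged into one kernel-verified Lean document; each statement's English description precedes it below -/
import Mathlib

section
/- Let V be a vector configuration in a finite-dimensional real vector space E with dim E ≥ 1 and codeg*(V) ≥ 1. Then there exists a subfamily W of V that is totally cyclic — that is, every linear functional on E that is nonnegative on all vectors of W vanishes on all vectors of W — and satisfies codeg*(W) = codeg*(V), the dual codegree of W being computed in E. -/
open scoped Classical

noncomputable section

variable {E : Type*} [AddCommGroup E] [Module ℝ E] {ι : Type*} [Fintype ι]

/-- Number of indices where the functional is positive. -/
def posCount (φ : E →ₗ[ℝ] ℝ) (V : ι → E) : ℕ :=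
  (Finset.univ.filter fun i => 0 < φ (V i)).card

/-- Number of indices where the functional is negative. -/
def negCount (φ : E →ₗ[ℝ] ℝ) (V : ι → E) : ℕ :=
  (Finset.univ.filter fun i => φ (V i) < 0).card

/-- Number of indices where the functional is nonpositive. -/
def nonposCount (φ : E →ₗ[ℝ] ℝ) (V : ι → E) : ℕ :=
  (Finset.univ.filter fun i => φ (V i) ≤ 0).card

/-- Dual codegree: minimum over nonzero functionals of `nonposCount`; by convention the
number of elements when the ambient space is zero-dimensional (trivial). -/
def codegStar (V : ι → E) : ℕ :=
  if Nontrivial E then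
    sInf {k | ∃ φ : E →ₗ[ℝ] ℝ, φ ≠ 0 ∧ nonposCount φ V = k}
  else Fintype.card ι

/-- Rank of a configuration: dimension of the linear span. -/
def confRank (V : ι → E) : ℕ :=
  Module.finrank ℝ (Submodule.span ℝ (Set.range V))

/-- Dual degree: maximum over nonzero functionals of `posCount`, minus the rank. -/
def degStar (V : ι → E) : ℤ :=
  (sSup {k | ∃ φ : E →ₗ[ℝ] ℝ, φ ≠ 0 ∧ posCount φ V = k} : ℕ) - (confRank V : ℤ)

/-- Covector discrepancy: maximum over all functionals of `|φ⁺(V) − φ⁻(V)|`. -/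
def disc (V : ι → E) : ℕ :=
  sSup {k | ∃ φ : E →ₗ[ℝ] ℝ, k = ((posCount φ V : ℤ) - (negCount φ V : ℤ)).natAbs}

/-- The subfamily of `V` indexed by `S`. -/
def subfam (V : ι → E) (S : Finset ι) : {i // i ∈ S} → E := fun i => V i.1

/-- The contraction `V/W`, where `W = V|S`: images of the remaining vectors in the
quotient by the span of `W`. -/
def contract (V : ι → E) (S : Finset ι) :
    {i // i ∉ S} → E ⧸ Submodule.span ℝ (V '' (S : Set ι)) :=
  fun i => Submodule.Quotient.mk (V i.1)

/-- `V|S` is linearly closed in `V`. -/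
def LinClosed (V : ι → E) (S : Finset ι) : Prop :=
  ∀ i, V i ∈ Submodule.span ℝ (V '' (S : Set ι)) → i ∈ S

/-- A codegree* decomposition of `V` of length `m`: a partition of the index set into
parts `S 0, S 1, …, S m` with `codegStar (V|S i) ≥ 1` for `i ≠ 0` and
`codegStar V = ∑_{i=1}^m codegStar (V|S i)`. -/
def IsCodegDecomp (V : ι → E) (m : ℕ) (S : Fin (m + 1) → Finset ι) : Prop :=
  (∀ i j, i ≠ j → Disjoint (S i) (S j)) ∧
  (∀ x, ∃ i, x ∈ S i) ∧
  (∀ i, i ≠ 0 → 1 ≤ codegStar (subfam V (S i))) ∧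
  codegStar V = ∑ i ∈ Finset.univ.erase (0 : Fin (m + 1)), codegStar (subfam V (S i))


/-!
Let `N` be the set of indices `i` such that every functional that is nonnegative on all of `V`
vanishes at `V i`. Summing one witness per index outside `N` gives a functional `θ ≥ 0` on `V`
that is positive exactly off `N`. For any `φ`, the functional `φ + μ θ` with `μ` large is
positive off `N` and agrees with `φ` on `N`. Applied to `φ ≥ 0` on `N`, this shows that `V|N`
is totally cyclic; applied to arbitrary nonzero `φ`, it turns every value of `φ⁰⁻(V|N)` into a
value of `φ⁰⁻(V)`, while `φ⁰⁻(V|N) ≤ φ⁰⁻(V)` holds trivially, so the dual codegrees agree.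
-/

def IsTotallyCyclic (V : ι → E) (S : Finset ι) : Prop :=
  ∀ φ : E →ₗ[ℝ] ℝ, (∀ i ∈ S, 0 ≤ φ (V i)) → ∀ i ∈ S, φ (V i) = 0

def cyclicPart (V : ι → E) : Finset ι :=
  Finset.univ.filter fun i => ∀ φ : E →ₗ[ℝ] ℝ, (∀ j, 0 ≤ φ (V j)) → φ (V i) = 0

section

variable {V : ι → E}

theorem mem_cyclicPart {i : ι} :
    i ∈ cyclicPart V ↔ ∀ φ : E →ₗ[ℝ] ℝ, (∀ j, 0 ≤ φ (V j)) → φ (V i) = 0 := by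
  simp [cyclicPart]

theorem cyclicPart_eq_univ [Subsingleton E] : cyclicPart V = Finset.univ :=
  Finset.eq_univ_of_forall fun i => mem_cyclicPart.mpr fun φ _ => by
    rw [Subsingleton.elim (V i) 0, map_zero]

theorem exists_nonneg_pos_iff_notMem_cyclicPart :
    ∃ θ : E →ₗ[ℝ] ℝ, (∀ j, 0 ≤ θ (V j)) ∧ ∀ i, 0 < θ (V i) ↔ i ∉ cyclicPart V := by
  have witness (i : ι) : ∃ φ : E →ₗ[ℝ] ℝ, (∀ j, 0 ≤ φ (V j)) ∧ (i ∉ cyclicPart V → 0 < φ (V i)) := by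
    by_cases hi : i ∈ cyclicPart V
    · exact ⟨0, fun _ => le_rfl, fun h => absurd hi h⟩
    · obtain ⟨φ, hφ, hφi⟩ := not_forall₂.mp (mem_cyclicPart.not.mp hi)
      exact ⟨φ, hφ, fun _ => (hφ i).lt_of_ne' hφi⟩
  choose g hg_nonneg hg_pos using witness
  have hθ_nonneg (j : ι) : 0 ≤ (∑ i, g i) (V j) := by
    rw [LinearMap.sum_apply]
    exact Finset.sum_nonneg fun i _ => hg_nonneg i j
  refine ⟨∑ i, g i, hθ_nonneg, fun i => ⟨fun hpos hi => ?_, fun hi => ?_⟩⟩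
  · exact hpos.ne' (mem_cyclicPart.mp hi _ hθ_nonneg)
  · rw [LinearMap.sum_apply]
    exact Finset.sum_pos' (fun k _ => hg_nonneg k i) ⟨i, Finset.mem_univ i, hg_pos i hi⟩

theorem exists_add_smul_pos (φ θ : E →ₗ[ℝ] ℝ) (V : ι → E) :
    ∃ μ₀ : ℝ, ∀ μ ≥ μ₀, ∀ i, 0 < θ (V i) → 0 < (φ + μ • θ) (V i) := by
  obtain ⟨c, hc⟩ := Finite.exists_le fun i => -φ (V i) / θ (V i)
  refine ⟨c + 1, fun μ hμ i hθi => ?_⟩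
  have hc' : -φ (V i) ≤ c * θ (V i) := (div_le_iff₀ hθi).mp (hc i)
  rw [LinearMap.add_apply, LinearMap.smul_apply, smul_eq_mul]
  nlinarith

theorem isTotallyCyclic_cyclicPart (V : ι → E) : IsTotallyCyclic V (cyclicPart V) := by
  obtain ⟨θ, hθ_nonneg, hθ_pos⟩ := exists_nonneg_pos_iff_notMem_cyclicPart (V := V)
  have hθ_zero {i} (hi : i ∈ cyclicPart V) : θ (V i) = 0 := mem_cyclicPart.mp hi θ hθ_nonneg
  intro φ hφ i hi
  obtain ⟨μ, hμ⟩ := exists_add_smul_pos φ θ V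
  have hψ_nonneg (j : ι) : 0 ≤ (φ + μ • θ) (V j) := by
    by_cases hj : j ∈ cyclicPart V
    · simpa [hθ_zero hj] using hφ j hj
    · exact (hμ μ le_rfl j ((hθ_pos j).mpr hj)).le
  simpa [hθ_zero hi] using mem_cyclicPart.mp hi _ hψ_nonneg

omit [Fintype ι] in
theorem nonposCount_subfam (φ : E →ₗ[ℝ] ℝ) (V : ι → E) (S : Finset ι) :
    nonposCount φ (subfam V S) = (S.filter fun i => φ (V i) ≤ 0).card := by
  rw [nonposCount, Finset.card_filter, Finset.card_filter]
  exact Finset.sum_coe_sort S fun i => if φ (V i) ≤ 0 then 1 else 0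

theorem nonposCount_subfam_le (φ : E →ₗ[ℝ] ℝ) (V : ι → E) (S : Finset ι) :
    nonposCount φ (subfam V S) ≤ nonposCount φ V := by
  rw [nonposCount_subfam, nonposCount]
  exact Finset.card_le_card (Finset.filter_subset_filter _ (Finset.subset_univ S))

theorem exists_ne_zero_nonposCount_eq_subfam_cyclicPart {φ : E →ₗ[ℝ] ℝ} (hφ : φ ≠ 0) :
    ∃ ψ : E →ₗ[ℝ] ℝ, ψ ≠ 0 ∧ nonposCount ψ V = nonposCount φ (subfam V (cyclicPart V)) := by
  obtain ⟨θ, hθ_nonneg, hθ_pos⟩ := exists_nonneg_pos_iff_notMem_cyclicPart (V := V)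
  obtain ⟨μ₀, hμ₀⟩ := exists_add_smul_pos φ θ V
  have hcount (μ : ℝ) (hμ : μ₀ ≤ μ) :
      nonposCount (φ + μ • θ) V = nonposCount φ (subfam V (cyclicPart V)) := by
    rw [nonposCount, nonposCount_subfam]
    congr 1
    ext i
    by_cases hi : i ∈ cyclicPart V
    · simp [hi, mem_cyclicPart.mp hi θ hθ_nonneg]
    · simpa [hi] using hμ₀ μ hμ i ((hθ_pos i).mpr hi)
  -- `φ + μ • θ` vanishes for at most one `μ`, since `θ = 0` would force `φ = 0`.
  have hne : φ + μ₀ • θ ≠ 0 ∨ φ + (μ₀ + 1) • θ ≠ 0 := by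
    by_contra! ⟨h₀, h₁⟩
    have hθ : θ = 0 := by
      calc θ = (φ + (μ₀ + 1) • θ) - (φ + μ₀ • θ) := by module
        _ = 0 := by rw [h₀, h₁, sub_zero]
    exact hφ (by simpa [hθ] using h₀)
  rcases hne with h | h
  · exact ⟨_, h, hcount μ₀ le_rfl⟩
  · exact ⟨_, h, hcount (μ₀ + 1) (by linarith)⟩

theorem codegStar_subfam_cyclicPart (V : ι → E) :
    codegStar (subfam V (cyclicPart V)) = codegStar V := by
  unfold codegStar
  split_ifs with hE
  · refine csInf_eq_csInf_of_forall_exists_le ?_ ?_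
    · rintro _ ⟨φ, hφ, rfl⟩
      obtain ⟨ψ, hψ, hcount⟩ := exists_ne_zero_nonposCount_eq_subfam_cyclicPart (V := V) hφ
      exact ⟨_, ⟨ψ, hψ, rfl⟩, hcount.le⟩
    · rintro _ ⟨φ, hφ, rfl⟩
      exact ⟨_, ⟨φ, hφ, rfl⟩, nonposCount_subfam_le φ V _⟩
  · have : Subsingleton E := not_nontrivial_iff_subsingleton.mp hE
    rw [Fintype.card_coe, cyclicPart_eq_univ, Finset.card_univ]

end

theorem exists_totally_cyclic_subfam_general {E : Type*} [AddCommGroup E] [Module ℝ E]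
    {ι : Type*} [Fintype ι] (V : ι → E) :
    ∃ S : Finset ι,
      (∀ φ : E →ₗ[ℝ] ℝ, (∀ i ∈ S, 0 ≤ φ (V i)) → ∀ i ∈ S, φ (V i) = 0) ∧
      codegStar (subfam V S) = codegStar V :=
  ⟨cyclicPart V, isTotallyCyclic_cyclicPart V, codegStar_subfam_cyclicPart V⟩

/-- any configuration of positive dual codegree has a totally cyclic
subfamily with the same dual codegree (computed in the ambient space). -/
theorem exists_totally_cyclic_subfam {E : Type*} [AddCommGroup E] [Module ℝ E]
    [FiniteDimensional ℝ E] (hE : 1 ≤ Module.finrank ℝ E)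
    {ι : Type*} [Fintype ι] (V : ι → E) (hV : 1 ≤ codegStar V) :
    ∃ S : Finset ι,
      (∀ φ : E →ₗ[ℝ] ℝ, (∀ i ∈ S, 0 ≤ φ (V i)) → ∀ i ∈ S, φ (V i) = 0) ∧
      codegStar (subfam V S) = codegStar V :=
  exists_totally_cyclic_subfam_general V

end
end

section
/- A vector configuration V in a finite-dimensional real vector space E satisfies disc(V) = 0 if and only if V is centrally symmetric up to rescaling. -/
open scoped Classical

noncomputable section

variable {E : Type*} [AddCommGroup E] [Module ℝ E] {ι : Type*} [Fintype ι]

/-!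
If `σ` pairs every `v i` with a negative multiple of itself, it exchanges `{φ > 0}` and `{φ < 0}`
for every functional `φ`. Conversely, zero discrepancy passes to the vectors lying in any
subspace `W`: take a functional `φ` that vanishes on `W` but at no `v i` outside `W`; for small
`ε > 0` the signs of `φ + ε ψ` are those of `φ` off `W` and those of `ψ` on `W`, so balance for
`φ + ε ψ` and for `φ` gives balance for `ψ` on `W`. With `W = ℝ u` and `ψ u > 0` this says that
the open ray through `u` contains as many `v i` as the opposite ray, and matching these fibres
in pairs gives the involution.
-/

open Finset Filter Topology

/-- Zero discrepancy of the subconfiguration indexed by `s`. -/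
def IsBalanced (V : ι → E) (s : Finset ι) : Prop :=
  ∀ φ : E →ₗ[ℝ] ℝ, #{i ∈ s | 0 < φ (V i)} = #{i ∈ s | φ (V i) < 0}

theorem disc_eq_zero_iff_isBalanced_univ (V : ι → E) : disc V = 0 ↔ IsBalanced V univ := by
  have hbdd : BddAbove {k | ∃ φ : E →ₗ[ℝ] ℝ,
      k = ((posCount φ V : ℤ) - (negCount φ V : ℤ)).natAbs} := by
    refine ⟨Fintype.card ι, ?_⟩
    rintro k ⟨φ, rfl⟩
    have := card_filter_le univ fun i => 0 < φ (V i)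
    have := card_filter_le univ fun i => φ (V i) < 0
    simp only [posCount, negCount, card_univ] at *
    omega
  constructor
  · intro h φ
    have := le_csSup hbdd ⟨φ, rfl⟩
    rw [← disc, h] at this
    simp only [posCount, negCount] at this
    omega
  · intro h
    have hset : {k | ∃ φ : E →ₗ[ℝ] ℝ,
        k = ((posCount φ V : ℤ) - (negCount φ V : ℤ)).natAbs} = {0} := by
      ext k
      simp only [posCount, negCount, Set.mem_ofPred_eq, Set.mem_singleton_iff]
      exact ⟨fun ⟨φ, hk⟩ => by rw [hk, h φ, sub_self, Int.natAbs_zero], fun hk => ⟨0, by simp [hk]⟩⟩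
    rw [disc, hset, csSup_singleton]

theorem isBalanced_univ_of_neg_smul {V : ι → E} (σ : Equiv.Perm ι) (lam : ι → ℝ)
    (hσ : ∀ i, σ (σ i) = i) (hlam : ∀ i, 0 < lam i) (hV : ∀ i, V (σ i) = -lam i • V i) :
    IsBalanced V univ := by
  have hφ (φ : E →ₗ[ℝ] ℝ) (i : ι) : φ (V (σ i)) = -(lam i * φ (V i)) := by
    simp [hV]
  intro φ
  refine card_nbij' σ σ (fun i hi => ?_) (fun i hi => ?_) (fun i _ => hσ i) (fun i _ => hσ i)
  · simp only [coe_filter, Set.mem_ofPred_eq, mem_univ, true_and] at hi ⊢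
    rw [hφ, neg_lt_zero]
    exact mul_pos (hlam i) hi
  · simp only [coe_filter, Set.mem_ofPred_eq, mem_univ, true_and] at hi ⊢
    rw [hφ, neg_pos]
    exact mul_neg_of_pos_of_neg (hlam i) hi

theorem eventually_pos_add_mul_iff (a b : ℝ) :
    ∀ᶠ ε in 𝓝[>] (0 : ℝ), 0 < a + ε * b ↔ 0 < a ∨ a = 0 ∧ 0 < b := by
  have hlim : Tendsto (fun ε : ℝ => a + ε * b) (𝓝[>] 0) (𝓝 a) :=
    tendsto_nhdsWithin_of_tendsto_nhds <|
      (show Continuous fun ε : ℝ => a + ε * b by fun_prop).tendsto' 0 a (by simp)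
  rcases lt_trichotomy a 0 with ha | rfl | ha
  · filter_upwards [hlim.eventually (gt_mem_nhds ha)] with ε hε
    simp [hε.not_gt, ha.not_gt, ha.ne]
  · filter_upwards [self_mem_nhdsWithin] with ε (hε : 0 < ε)
    simp [mul_pos_iff_of_pos_left hε]
  · filter_upwards [hlim.eventually (lt_mem_nhds ha)] with ε hε
    simp [hε, ha]

omit [Fintype ι] in
theorem eventually_card_pos_add_smul (V : ι → E) (s : Finset ι) (φ ψ : E →ₗ[ℝ] ℝ) :
    ∀ᶠ ε in 𝓝[>] (0 : ℝ), #{i ∈ s | 0 < (φ + ε • ψ) (V i)} =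
      #{i ∈ s | 0 < φ (V i)} + #{i ∈ {i ∈ s | φ (V i) = 0} | 0 < ψ (V i)} := by
  filter_upwards [(eventually_all_finset s).2 fun i _ =>
    eventually_pos_add_mul_iff (φ (V i)) (ψ (V i))] with ε hε
  simp only [LinearMap.add_apply, LinearMap.smul_apply, smul_eq_mul]
  rw [filter_congr hε, filter_or, filter_filter, card_union_of_disjoint]
  exact disjoint_filter.2 fun i _ h₁ h₂ => h₁.ne' h₂.1

omit [Fintype ι] in
theorem card_filter_neg_apply_pos (V : ι → E) (s : Finset ι) (φ : E →ₗ[ℝ] ℝ) :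
    #{i ∈ s | 0 < (-φ) (V i)} = #{i ∈ s | φ (V i) < 0} := by
  simp

omit [Fintype ι] in
theorem IsBalanced.filter_ker {V : ι → E} {s : Finset ι} (h : IsBalanced V s)
    (φ : E →ₗ[ℝ] ℝ) : IsBalanced V {i ∈ s | φ (V i) = 0} := by
  intro ψ
  obtain ⟨ε, hpos, hneg⟩ := ((eventually_card_pos_add_smul V s φ ψ).and
    (eventually_card_pos_add_smul V s (-φ) (-ψ))).exists
  have h₁ := h (φ + ε • ψ)
  have h₂ := h φ
  rw [← card_filter_neg_apply_pos, neg_add] at h₁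
  rw [← card_filter_neg_apply_pos] at h₂ ⊢
  have hker : {i ∈ s | (-φ) (V i) = 0} = {i ∈ s | φ (V i) = 0} := by simp
  rw [smul_neg, hker] at hneg
  omega

theorem IsBalanced.filter_mem_submodule {V : ι → E} {s : Finset ι} (h : IsBalanced V s)
    (W : Submodule ℝ E) : IsBalanced V {i ∈ s | V i ∈ W} := by
  obtain ⟨f, hf⟩ := Module.exists_dual_forall_apply_ne_zero (K := ℝ)
    (fun i : {i // V i ∉ W} => W.mkQ (V i)) fun i => by
      simpa [Submodule.Quotient.mk_eq_zero] using i.2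
  have hker (i : ι) : f (W.mkQ (V i)) = 0 ↔ V i ∈ W :=
    ⟨fun h₀ => by_contra fun hi => hf ⟨i, hi⟩ h₀,
      fun hi => by simp [(Submodule.Quotient.mk_eq_zero W).2 hi]⟩
  simpa only [LinearMap.comp_apply, hker] using h.filter_ker (f ∘ₗ W.mkQ)

theorem mem_span_singleton_and_pos_iff {ψ : E →ₗ[ℝ] ℝ} {u : E} (hψ : 0 < ψ u) (v : E) :
    v ∈ ℝ ∙ u ∧ 0 < ψ v ↔ ∃ r : ℝ, 0 < r ∧ v = r • u := by
  constructor
  · rintro ⟨hv, hψv⟩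
    obtain ⟨r, rfl⟩ := Submodule.mem_span_singleton.1 hv
    rw [map_smul, smul_eq_mul] at hψv
    exact ⟨r, pos_of_mul_pos_left hψv hψ.le, rfl⟩
  · rintro ⟨r, hr, rfl⟩
    exact ⟨Submodule.smul_mem _ _ (Submodule.mem_span_singleton_self u),
      by rw [map_smul, smul_eq_mul]; exact mul_pos hr hψ⟩

theorem IsBalanced.card_pos_smul_eq {V : ι → E} {s : Finset ι} (h : IsBalanced V s) {u : E}
    (hu : u ≠ 0) :
    #{i ∈ s | ∃ r : ℝ, 0 < r ∧ V i = r • u} = #{i ∈ s | ∃ r : ℝ, 0 < r ∧ V i = r • -u} := by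
  obtain ⟨f, hf⟩ := Module.exists_dual_forall_apply_ne_zero (K := ℝ) (fun _ : Unit => u)
    fun _ => hu
  set ψ := f u • f
  have hψ : 0 < ψ u := mul_self_pos.2 (hf ())
  have hψ' : 0 < (-ψ) (-u) := by simpa using hψ
  have hspan : (ℝ ∙ -u) = ℝ ∙ u := by rw [← Set.neg_singleton, Submodule.span_neg]
  have := h.filter_mem_submodule (ℝ ∙ u) ψ
  rw [← card_filter_neg_apply_pos, filter_filter, filter_filter] at this
  have hneg : {i ∈ s | V i ∈ ℝ ∙ u ∧ 0 < (-ψ) (V i)} = {i ∈ s | ∃ r : ℝ, 0 < r ∧ V i = r • -u} :=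
    filter_congr fun v _ => hspan ▸ mem_span_singleton_and_pos_iff hψ' (V v)
  rwa [filter_congr fun v _ => mem_span_singleton_and_pos_iff hψ (V v), hneg] at this

theorem exists_involutive_perm_map_eq_neg {α β : Type*} [Fintype α] [InvolutiveNeg β]
    (f : α → β) (hf : ∀ b : β, b ≠ -b)
    (hcard : ∀ b, Fintype.card {a // f a = b} = Fintype.card {a // f a = -b}) :
    ∃ σ : Equiv.Perm α, Function.Involutive σ ∧ ∀ a, f (σ a) = -f a := by
  let e (b : β) : {a // f a = b} ≃ {a // -f a = b} :=
    Fintype.equivOfCardEq <| (hcard b).trans <|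
      Fintype.card_congr <| Equiv.subtypeEquivRight fun _ => neg_eq_iff_eq_neg.symm
  let τ := Equiv.ofFiberEquiv e
  have hτ (a : α) : f (τ a) = -f a := neg_eq_iff_eq_neg.1 (Equiv.ofFiberEquiv_map e a)
  have hτ_symm (a : α) : f (τ.symm a) = -f a := by
    rw [← neg_neg (f (τ.symm a)), ← hτ, τ.apply_symm_apply]
  -- A linear order on `β` chooses one element `b < -b` of each pair `{b, -b}`; `τ` is used
  -- forwards on the chosen fibres and backwards on the others.
  let _ : LinearOrder β := WellOrderingRel.isWellOrder.linearOrder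
  let s (a : α) : α := if f a < -f a then τ a else τ.symm a
  have hs (a : α) : f (s a) = -f a := by
    by_cases ha : f a < -f a <;> simp [s, ha, hτ, hτ_symm]
  have hs_inv : Function.Involutive s := by
    intro a
    by_cases ha : f a < -f a
    · have : ¬ f (τ a) < -f (τ a) := by rw [hτ, neg_neg]; exact ha.asymm
      simp [s, ha, this]
    · have : f (τ.symm a) < -f (τ.symm a) := by
        rw [hτ_symm, neg_neg]; exact (lt_or_gt_of_ne (hf (f a))).resolve_left ha
      simp [s, ha, this]
  exact ⟨hs_inv.toPerm s, hs_inv, hs⟩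

theorem IsBalanced.card_rayOfNeZero_eq {V : ι → E} (h : IsBalanced V univ)
    (x : Module.Ray ℝ E) :
    Fintype.card {i : {i // V i ≠ 0} // rayOfNeZero ℝ (V i) i.2 = x} =
      Fintype.card {i : {i // V i ≠ 0} // rayOfNeZero ℝ (V i) i.2 = -x} := by
  have hfiber (u : E) (hu : u ≠ 0) :
      Fintype.card {i : {i // V i ≠ 0} // rayOfNeZero ℝ (V i) i.2 = rayOfNeZero ℝ u hu} =
        #{i | ∃ r : ℝ, 0 < r ∧ V i = r • u} := by
    rw [← Fintype.card_subtype]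
    refine Fintype.card_congr ((Equiv.subtypeEquivRight fun i => ?_).trans
      (Equiv.subtypeSubtypeEquivSubtype fun hi => ?_))
    · rw [ray_eq_iff, ← exists_pos_right_iff_sameRay i.2 hu]
    · obtain ⟨r, hr, hV⟩ := hi
      rw [hV]
      exact smul_ne_zero hr.ne' hu
  induction x using Module.Ray.ind with
  | h u hu => rw [neg_rayOfNeZero, hfiber, hfiber]; exact h.card_pos_smul_eq hu

theorem disc_eq_zero_iff_centrally_symmetric_general {E : Type*} [AddCommGroup E] [Module ℝ E]
    {ι : Type*} [Fintype ι] (V : ι → E) :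
    disc V = 0 ↔
      ∃ (σ : Equiv.Perm ι) (lam : ι → ℝ),
        (∀ i, σ (σ i) = i) ∧ (∀ i, 0 < lam i) ∧ ∀ i, V (σ i) = -lam i • V i := by
  rw [disc_eq_zero_iff_isBalanced_univ]
  refine ⟨fun h => ?_, fun ⟨σ, lam, hσ, hlam, hV⟩ => isBalanced_univ_of_neg_smul σ lam hσ hlam hV⟩
  obtain ⟨σ, hσ, hray⟩ := exists_involutive_perm_map_eq_neg
    (fun i : {i // V i ≠ 0} => rayOfNeZero ℝ (V i) i.2) Module.Ray.ne_neg_self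
    h.card_rayOfNeZero_eq
  have hV (i : ι) : ∃ l : ℝ, 0 < l ∧ V (Equiv.Perm.ofSubtype σ i) = -l • V i := by
    by_cases hi : V i = 0
    · exact ⟨1, one_pos, by simp [Equiv.Perm.ofSubtype_apply_of_not_mem σ (not_not.2 hi), hi]⟩
    · have hsame := hray ⟨i, hi⟩
      rw [neg_rayOfNeZero, ray_eq_iff] at hsame
      obtain ⟨l, hl, hl'⟩ := hsame.exists_pos_right (σ ⟨i, hi⟩).2 (neg_ne_zero.2 hi)
      exact ⟨l, hl, by rw [Equiv.Perm.ofSubtype_apply_of_mem σ hi, hl', smul_neg, neg_smul]⟩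
  choose lam hlam hV using hV
  have hσσ : σ * σ = 1 := Equiv.ext hσ
  refine ⟨Equiv.Perm.ofSubtype σ, lam, fun i => ?_, hlam, hV⟩
  rw [← Equiv.Perm.mul_apply, ← map_mul, hσσ, map_one, Equiv.Perm.one_apply]

/-- `disc V = 0` iff `V` is centrally symmetric up to rescaling. -/
theorem disc_eq_zero_iff_centrally_symmetric {E : Type*} [AddCommGroup E] [Module ℝ E]
    [FiniteDimensional ℝ E] {ι : Type*} [Fintype ι] (V : ι → E) :
    disc V = 0 ↔
      ∃ (σ : Equiv.Perm ι) (lam : ι → ℝ),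
        (∀ i, σ (σ i) = i) ∧ (∀ i, 0 < lam i) ∧ ∀ i, V (σ i) = -lam i • V i :=
  disc_eq_zero_iff_centrally_symmetric_general V

end
end

section
/- Let V be a vector configuration in a finite-dimensional real vector space E with dim E ≥ 1, and let W = V|S be a subfamily that is linearly closed in V. Then disc(V) ≥ disc(W) + disc(V/W). -/
open scoped Classical

noncomputable section

variable {E : Type*} [AddCommGroup E] [Module ℝ E] {ι : Type*} [Fintype ι]

/-!
Let `φ` attain `disc W`, `ψ` attain `disc (V/W)`, and let `χ` be a functional on `E/span W`
that vanishes on no vector of `V/W` (one exists because `W` is linearly closed). For small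
`ε > 0` and then smaller `δ > 0`, the functional `η = ψ + ε χ + δ φ` (with `ψ, χ` pulled back
to `E`) has the sign of `φ` on `W`, the sign of `ψ` where `ψ` does not vanish on `V/W`, and the
sign of `χ` on the rest. Hence its sign sum is `A + B + C`, where `A, B, C` are the sign sums of
`φ` on `W`, of `ψ` on `V/W` and of `χ` on the part of `V/W` killed by `ψ`. Negating `φ` or `χ`
negates `A` or `C`, and one of the four choices gives `|±A + B ± C| ≥ |A| + |B|`.
-/

open Filter Topology

def signSum (φ : E →ₗ[ℝ] ℝ) (V : ι → E) : ℤ := ∑ i, (SignType.sign (φ (V i)) : ℤ)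

lemma posCount_sub_negCount (φ : E →ₗ[ℝ] ℝ) (V : ι → E) :
    (posCount φ V : ℤ) - negCount φ V = signSum φ V := by
  simp only [posCount, negCount, signSum, Finset.card_filter, Nat.cast_sum,
    ← Finset.sum_sub_distrib]
  refine Finset.sum_congr rfl fun i _ => ?_
  rcases lt_trichotomy (φ (V i)) 0 with h | h | h
  · simp [h, h.not_gt]
  · simp [h]
  · simp [h, h.not_gt]

lemma signSum_neg (φ : E →ₗ[ℝ] ℝ) (V : ι → E) : signSum (-φ) V = -signSum φ V := by
  simp [signSum, Left.sign_neg]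

lemma natAbs_signSum_le_card (φ : E →ₗ[ℝ] ℝ) (V : ι → E) :
    (signSum φ V).natAbs ≤ Fintype.card ι := by
  rw [← posCount_sub_negCount]
  have hpos : posCount φ V ≤ Fintype.card ι := Finset.card_filter_le _ _
  have hneg : negCount φ V ≤ Fintype.card ι := Finset.card_filter_le _ _
  omega

lemma disc_eq_sSup (V : ι → E) :
    disc V = sSup {k | ∃ φ : E →ₗ[ℝ] ℝ, k = (signSum φ V).natAbs} := by
  simp only [disc, posCount_sub_negCount]

lemma bddAbove_natAbs_signSum (V : ι → E) :
    BddAbove {k | ∃ φ : E →ₗ[ℝ] ℝ, k = (signSum φ V).natAbs} :=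
  ⟨Fintype.card ι, by rintro _ ⟨φ, rfl⟩; exact natAbs_signSum_le_card φ V⟩

lemma natAbs_signSum_le_disc (φ : E →ₗ[ℝ] ℝ) (V : ι → E) : (signSum φ V).natAbs ≤ disc V := by
  rw [disc_eq_sSup]
  exact le_csSup (bddAbove_natAbs_signSum V) ⟨φ, rfl⟩

lemma exists_natAbs_signSum_eq_disc (V : ι → E) :
    ∃ φ : E →ₗ[ℝ] ℝ, (signSum φ V).natAbs = disc V := by
  rw [disc_eq_sSup]
  have hne : {k | ∃ φ : E →ₗ[ℝ] ℝ, k = (signSum φ V).natAbs}.Nonempty := ⟨_, 0, rfl⟩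
  obtain ⟨φ, h⟩ := Nat.sSup_mem hne (bddAbove_natAbs_signSum V)
  exact ⟨φ, h.symm⟩

theorem exists_sign_add_smul_eq {F κ : Type*} [AddCommGroup F] [Module ℝ F] [Finite κ]
    (v : κ → F) (α β : F →ₗ[ℝ] ℝ) :
    ∃ ε : ℝ, ∀ j, SignType.sign ((α + ε • β) (v j)) =
      if α (v j) = 0 then SignType.sign (β (v j)) else SignType.sign (α (v j)) := by
  have key : ∀ j, ∀ᶠ ε in 𝓝[>] (0 : ℝ), SignType.sign (α (v j) + ε * β (v j)) =
      if α (v j) = 0 then SignType.sign (β (v j)) else SignType.sign (α (v j)) := by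
    intro j
    split_ifs with h
    · filter_upwards [self_mem_nhdsWithin] with ε hε
      rw [h, zero_add, sign_mul, sign_pos hε, one_mul]
    · have hlim : Tendsto (fun ε : ℝ => α (v j) + ε * β (v j)) (𝓝[>] 0) (𝓝 (α (v j))) :=
        tendsto_nhdsWithin_of_tendsto_nhds
          ((by fun_prop : Continuous fun ε : ℝ => α (v j) + ε * β (v j)).tendsto' 0 _ (by simp))
      have hsign := (continuousAt_sign_of_ne_zero h).tendsto
      rw [nhds_discrete SignType, tendsto_pure] at hsign
      exact hlim.eventually hsign
  obtain ⟨ε, hε⟩ := (eventually_all.2 key).exists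
  exact ⟨ε, fun j => by simpa using hε j⟩

lemma signSum_eq_add_signSum_ker {α β γ : E →ₗ[ℝ] ℝ} {V : ι → E}
    (h : ∀ i, SignType.sign (γ (V i)) =
      if α (V i) = 0 then SignType.sign (β (V i)) else SignType.sign (α (V i))) :
    signSum γ V = signSum α V + signSum β (fun i : {i // α (V i) = 0} => V i) := by
  have hker : ∀ i : {i // α (V i) = 0}, (SignType.sign (α (V i)) : ℤ) = 0 := fun i => by
    simp [i.2]
  have hγ_ker : ∀ i : {i // α (V i) = 0}, SignType.sign (γ (V i)) = SignType.sign (β (V i)) :=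
    fun i => by rw [h, if_pos i.2]
  have hγ_ker_compl : ∀ i : {i // ¬α (V i) = 0},
      SignType.sign (γ (V i)) = SignType.sign (α (V i)) := fun i => by rw [h, if_neg i.2]
  simp only [signSum, ← Fintype.sum_subtype_add_sum_subtype (fun i => α (V i) = 0), hker,
    hγ_ker, hγ_ker_compl, Finset.sum_const_zero, zero_add]
  ring

lemma signSum_eq_signSum_subfam_add_signSum_contract {V : ι → E} {S : Finset ι}
    {η φ : E →ₗ[ℝ] ℝ} {β : (E ⧸ Submodule.span ℝ (V '' (S : Set ι))) →ₗ[ℝ] ℝ}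
    (h_mem : ∀ i ∈ S, SignType.sign (η (V i)) = SignType.sign (φ (V i)))
    (h_notMem : ∀ i ∉ S, SignType.sign (η (V i)) =
      SignType.sign (β (Submodule.Quotient.mk (V i)))) :
    signSum η V = signSum φ (subfam V S) + signSum β (contract V S) := by
  calc signSum η V = ∑ i ∈ S, (SignType.sign (η (V i)) : ℤ) +
        ∑ i ∈ Sᶜ, (SignType.sign (η (V i)) : ℤ) := (Finset.sum_add_sum_compl S _).symm
    _ = ∑ i ∈ S, (SignType.sign (φ (V i)) : ℤ) +
        ∑ i ∈ Sᶜ, (SignType.sign (β (Submodule.Quotient.mk (V i))) : ℤ) := by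
      rw [Finset.sum_congr rfl fun i hi => congrArg _ (h_mem i hi),
        Finset.sum_congr rfl fun i hi => congrArg _ (h_notMem i (Finset.mem_compl.1 hi))]
    _ = _ := congrArg₂ (· + ·) (Finset.sum_coe_sort S _).symm
        (Finset.sum_subtype Sᶜ (fun _ => Finset.mem_compl) _)

lemma exists_signSum_eq_subfam_add_contract_add (V : ι → E) (S : Finset ι) (φ : E →ₗ[ℝ] ℝ)
    (ψ χ : (E ⧸ Submodule.span ℝ (V '' (S : Set ι))) →ₗ[ℝ] ℝ)
    (hχ : ∀ j, χ (contract V S j) ≠ 0) :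
    ∃ η : E →ₗ[ℝ] ℝ, signSum η V = signSum φ (subfam V S) + signSum ψ (contract V S) +
      signSum χ (fun j : {j // ψ (contract V S j) = 0} => contract V S j) := by
  obtain ⟨ε, hβ⟩ := exists_sign_add_smul_eq (contract V S) ψ χ
  set β := ψ + ε • χ
  have hβ_ne : ∀ j, β (contract V S j) ≠ 0 := fun j => by
    rw [← sign_ne_zero, hβ j]
    split_ifs with h
    · exact sign_ne_zero.2 (hχ j)
    · exact sign_ne_zero.2 h
  obtain ⟨δ, hη⟩ := exists_sign_add_smul_eq V (β.comp (Submodule.mkQ _)) φ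
  refine ⟨β.comp (Submodule.mkQ _) + δ • φ, ?_⟩
  rw [add_assoc, ← signSum_eq_add_signSum_ker hβ]
  refine signSum_eq_signSum_subfam_add_signSum_contract (fun i hi => ?_) (fun i hi => ?_)
  · rw [hη i, if_pos]
    simp [(Submodule.Quotient.mk_eq_zero _).2 (Submodule.subset_span (Set.mem_image_of_mem V hi))]
  · rw [hη i]
    exact if_neg (hβ_ne ⟨i, hi⟩)

theorem disc_ge_disc_add_disc_contract_general {E : Type*} [AddCommGroup E] [Module ℝ E]
    {ι : Type*} [Fintype ι] (V : ι → E) (S : Finset ι) (hS : LinClosed V S) :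
    disc (subfam V S) + disc (contract V S) ≤ disc V := by
  obtain ⟨φ, hφ⟩ := exists_natAbs_signSum_eq_disc (subfam V S)
  obtain ⟨ψ, hψ⟩ := exists_natAbs_signSum_eq_disc (contract V S)
  obtain ⟨χ, hχ⟩ := Module.exists_dual_forall_apply_ne_zero (K := ℝ) (contract V S)
    fun j h => j.2 (hS j ((Submodule.Quotient.mk_eq_zero _).1 h))
  have hχ' : ∀ j, (-χ) (contract V S j) ≠ 0 := fun j => neg_ne_zero.2 (hχ j)
  have bound : ∀ φ' χ', (∀ j, χ' (contract V S j) ≠ 0) → (signSum φ' (subfam V S) +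
      signSum ψ (contract V S) + signSum χ' (fun j : {j // ψ (contract V S j) = 0} =>
      contract V S j)).natAbs ≤ disc V := fun φ' χ' hχ' => by
    obtain ⟨η, hη⟩ := exists_signSum_eq_subfam_add_contract_add V S φ' ψ χ' hχ'
    exact hη ▸ natAbs_signSum_le_disc η V
  have h₁ := bound φ χ hχ
  have h₂ := bound φ (-χ) hχ'
  have h₃ := bound (-φ) χ hχ
  have h₄ := bound (-φ) (-χ) hχ'
  simp only [signSum_neg] at h₂ h₃ h₄
  -- one of the four sign patterns `±A + B ± C` has all three summands of the same sign
  omega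

/-- for a linearly closed subfamily `W = V|S`,
`disc V ≥ disc W + disc (V/W)`. -/
theorem disc_ge_disc_add_disc_contract {E : Type*} [AddCommGroup E] [Module ℝ E]
    [FiniteDimensional ℝ E] (hE : 1 ≤ Module.finrank ℝ E)
    {ι : Type*} [Fintype ι] (V : ι → E) (S : Finset ι) (hS : LinClosed V S) :
    disc (subfam V S) + disc (contract V S) ≤ disc V :=
  disc_ge_disc_add_disc_contract_general V S hS
end
end

section
/- Let V be a vector configuration in a finite-dimensional real vector space E with dim E ≥ 1 and disc(V) > 0. Then there exists a subfamily W of V of rank 1 that is linearly closed in V, with disc(W) > 0 and disc(V) = disc(W) + disc(V/W). -/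
open scoped Classical

noncomputable section

variable {E : Type*} [AddCommGroup E] [Module ℝ E] {ι : Type*} [Fintype ι]

/-! Write `imbalance φ V = φ⁺(V) - φ⁻(V)` as a sum of signs. For every linearly closed `W`,
`disc W + disc (V/W) ≤ disc V`: lift a maximizer of `V/W` that vanishes on no vector of `V/W`
and add a small multiple of a maximizer of `W`.

For the converse on a suitable line, take a maximizer `φ` vanishing on no nonzero `V i` and a
generic `α`, and move `ρ • φ - α` from `ρ = +∞` downwards. Each time it vanishes on a line the
signs on that line flip; the first line `L` with nonzero `φ`-imbalance `c` at which this happens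
gives a functional vanishing on `L` with imbalance `disc V - c` (the lines crossed before have
zero imbalance), so `disc V - c ≤ disc (V/L)`, and `0 < c` by maximality of `φ`. -/

open Finset Filter Topology

def imbalance (φ : E →ₗ[ℝ] ℝ) (V : ι → E) : ℤ :=
  ∑ i, (SignType.sign (φ (V i)) : ℤ)

theorem imbalance_eq_posCount_sub_negCount (φ : E →ₗ[ℝ] ℝ) (V : ι → E) :
    imbalance φ V = posCount φ V - negCount φ V := by
  simp only [imbalance, posCount, negCount, Finset.card_filter, sign_apply]
  push_cast
  rw [← sum_sub_distrib]
  refine sum_congr rfl fun i _ => ?_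
  split_ifs with h₁ h₂ <;> first | rfl | exact absurd (h₁.trans h₂) (lt_irrefl 0)

theorem bddAbove_natAbs_posCount_sub_negCount (V : ι → E) :
    BddAbove {k | ∃ φ : E →ₗ[ℝ] ℝ, k = ((posCount φ V : ℤ) - (negCount φ V : ℤ)).natAbs} := by
  refine ⟨Fintype.card ι, ?_⟩
  rintro _ ⟨φ, rfl⟩
  have hpos : posCount φ V ≤ Fintype.card ι := card_filter_le _ _
  have hneg : negCount φ V ≤ Fintype.card ι := card_filter_le _ _
  omega

theorem natAbs_imbalance_le_disc (φ : E →ₗ[ℝ] ℝ) (V : ι → E) :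
    (imbalance φ V).natAbs ≤ disc V :=
  le_csSup (bddAbove_natAbs_posCount_sub_negCount V) ⟨φ, by rw [imbalance_eq_posCount_sub_negCount]⟩

theorem imbalance_le_disc (φ : E →ₗ[ℝ] ℝ) (V : ι → E) : imbalance φ V ≤ disc V :=
  Int.le_natAbs.trans (by exact_mod_cast natAbs_imbalance_le_disc φ V)

theorem imbalance_neg (φ : E →ₗ[ℝ] ℝ) (V : ι → E) : imbalance (-φ) V = -imbalance φ V := by
  simp only [imbalance, LinearMap.neg_apply, Left.sign_neg, SignType.coe_neg, sum_neg_distrib]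

theorem exists_imbalance_eq_disc (V : ι → E) : ∃ φ : E →ₗ[ℝ] ℝ, imbalance φ V = disc V := by
  obtain ⟨φ, hφ⟩ : disc V ∈ _ :=
    Nat.sSup_mem ⟨0, 0, by simp [posCount, negCount]⟩ (bddAbove_natAbs_posCount_sub_negCount V)
  rw [← imbalance_eq_posCount_sub_negCount] at hφ
  rcases Int.natAbs_eq (imbalance φ V) with h | h
  · exact ⟨φ, by rw [h, hφ]⟩
  · exact ⟨-φ, by rw [imbalance_neg, h, hφ, neg_neg]⟩

theorem eventually_sign_add_mul (a b : ℝ) :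
    ∀ᶠ t in 𝓝[>] 0,
      SignType.sign (a + t * b) = if a = 0 then SignType.sign b else SignType.sign a := by
  by_cases ha : a = 0
  · filter_upwards [self_mem_nhdsWithin] with t (ht : 0 < t)
    rw [if_pos ha, ha, zero_add, sign_mul, sign_pos ht, one_mul]
  · rw [if_neg ha]
    have hlim : Tendsto (fun t => a + t * b) (𝓝[>] 0) (𝓝 a) :=
      tendsto_nhdsWithin_of_tendsto_nhds <| by
        simpa using ((continuous_const.add (continuous_id.mul continuous_const)).tendsto
          (0 : ℝ) (f := fun t : ℝ => a + t * b))
    rcases lt_or_gt_of_ne ha with ha | ha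
    · filter_upwards [hlim.eventually (gt_mem_nhds ha)] with t ht
      rw [sign_neg ht, sign_neg ha]
    · filter_upwards [hlim.eventually (lt_mem_nhds ha)] with t ht
      rw [sign_pos ht, sign_pos ha]

theorem exists_sign_add_smul_apply (φ ψ : E →ₗ[ℝ] ℝ) (V : ι → E) :
    ∃ t : ℝ, 0 < t ∧ ∀ i, SignType.sign ((φ + t • ψ) (V i)) =
      if φ (V i) = 0 then SignType.sign (ψ (V i)) else SignType.sign (φ (V i)) := by
  obtain ⟨t, ht, ht₀⟩ := ((eventually_all.2 fun i =>
    eventually_sign_add_mul (φ (V i)) (ψ (V i))).and self_mem_nhdsWithin).exists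
  exact ⟨t, ht₀, fun i => by simpa using ht i⟩

theorem exists_dual_forall_apply_ne_zero_of_ne_zero {κ : Type*} [Finite κ] (v : κ → E) :
    ∃ f : E →ₗ[ℝ] ℝ, ∀ k, v k ≠ 0 → f (v k) ≠ 0 := by
  obtain ⟨f, hf⟩ := Module.exists_dual_forall_apply_ne_zero (K := ℝ)
    (fun k : {k // v k ≠ 0} => v k) fun k => k.2
  exact ⟨f, fun k hk => hf ⟨k, hk⟩⟩

theorem exists_imbalance_eq_disc_forall_apply_ne_zero (V : ι → E) :
    ∃ φ : E →ₗ[ℝ] ℝ, imbalance φ V = disc V ∧ ∀ i, V i ≠ 0 → φ (V i) ≠ 0 := by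
  obtain ⟨φ, hφ⟩ := exists_imbalance_eq_disc V
  obtain ⟨ψ₀, hψ₀⟩ := exists_dual_forall_apply_ne_zero_of_ne_zero V
  obtain ⟨ψ, hψ, hψsum⟩ : ∃ ψ : E →ₗ[ℝ] ℝ, (∀ i, V i ≠ 0 → ψ (V i) ≠ 0) ∧
      0 ≤ ∑ i with φ (V i) = 0, (SignType.sign (ψ (V i)) : ℤ) := by
    rcases le_total 0 (∑ i with φ (V i) = 0, (SignType.sign (ψ₀ (V i)) : ℤ)) with h | h
    · exact ⟨ψ₀, hψ₀, h⟩
    · refine ⟨-ψ₀, fun i hi => by simpa using hψ₀ i hi, ?_⟩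
      simpa only [LinearMap.neg_apply, Left.sign_neg, SignType.coe_neg, sum_neg_distrib,
        neg_nonneg] using h
  obtain ⟨t, ht, hsign⟩ := exists_sign_add_smul_apply φ ψ V
  have hsplit : imbalance (φ + t • ψ) V =
      imbalance φ V + ∑ i with φ (V i) = 0, (SignType.sign (ψ (V i)) : ℤ) := by
    rw [imbalance, imbalance, sum_filter, ← sum_add_distrib]
    refine sum_congr rfl fun i _ => ?_
    rw [hsign]
    split_ifs with h <;> simp [h]
  refine ⟨φ + t • ψ, le_antisymm (imbalance_le_disc _ V) (by omega), fun i hi => ?_⟩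
  rw [← sign_ne_zero, hsign]
  split_ifs with h
  · exact sign_ne_zero.2 (hψ i hi)
  · exact sign_ne_zero.2 h

omit [Fintype ι] in
theorem imbalance_subfam (φ : E →ₗ[ℝ] ℝ) (V : ι → E) (S : Finset ι) :
    imbalance φ (subfam V S) = ∑ i ∈ S, (SignType.sign (φ (V i)) : ℤ) :=
  sum_coe_sort S fun i => (SignType.sign (φ (V i)) : ℤ)

theorem imbalance_contract (V : ι → E) (S : Finset ι)
    (χ : (E ⧸ Submodule.span ℝ (V '' (S : Set ι))) →ₗ[ℝ] ℝ) :
    imbalance χ (contract V S) =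
      ∑ i ∈ Sᶜ, (SignType.sign (χ (Submodule.Quotient.mk (V i))) : ℤ) :=
  (sum_subtype Sᶜ (fun _ => mem_compl)
    fun i => (SignType.sign (χ (Submodule.Quotient.mk (V i))) : ℤ)).symm

theorem imbalance_eq_imbalance_subfam_add_imbalance_contract {V : ι → E} {S : Finset ι}
    {φ ψ : E →ₗ[ℝ] ℝ} {χ : (E ⧸ Submodule.span ℝ (V '' (S : Set ι))) →ₗ[ℝ] ℝ}
    (hS : ∀ i ∈ S, SignType.sign (φ (V i)) = SignType.sign (ψ (V i)))
    (hSc : ∀ i ∉ S,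
      SignType.sign (φ (V i)) = SignType.sign (χ (Submodule.Quotient.mk (V i)))) :
    imbalance φ V = imbalance ψ (subfam V S) + imbalance χ (contract V S) := by
  rw [imbalance, ← sum_add_sum_compl S, imbalance_subfam, imbalance_contract]
  congr 1
  · exact sum_congr rfl fun i hi => by rw [hS i hi]
  · exact sum_congr rfl fun i hi => by rw [hSc i (mem_compl.1 hi)]

omit [Fintype ι] in
theorem contract_ne_zero {V : ι → E} {S : Finset ι} (hS : LinClosed V S) (i : {i // i ∉ S}) :
    contract V S i ≠ 0 :=
  fun h => i.2 (hS i ((Submodule.Quotient.mk_eq_zero _).1 h))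

theorem disc_subfam_add_disc_contract_le {V : ι → E} {S : Finset ι} (hS : LinClosed V S) :
    disc (subfam V S) + disc (contract V S) ≤ disc V := by
  obtain ⟨φ, hφ⟩ := exists_imbalance_eq_disc (subfam V S)
  obtain ⟨χ, hχ, hχ₀⟩ := exists_imbalance_eq_disc_forall_apply_ne_zero (contract V S)
  obtain ⟨t, -, hsign⟩ := exists_sign_add_smul_apply (χ ∘ₗ Submodule.mkQ _) φ V
  have hχS : ∀ i ∈ S, χ (Submodule.Quotient.mk (V i)) = 0 := fun i hi => by
    rw [(Submodule.Quotient.mk_eq_zero _).2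
      (Submodule.subset_span (Set.mem_image_of_mem V hi)), map_zero]
  have hχSc : ∀ i ∉ S, χ (Submodule.Quotient.mk (V i)) ≠ 0 := fun i hi =>
    hχ₀ ⟨i, hi⟩ (contract_ne_zero hS _)
  have hsum := imbalance_eq_imbalance_subfam_add_imbalance_contract (ψ := φ) (χ := χ)
    (fun i hi => by rw [hsign, LinearMap.comp_apply, Submodule.mkQ_apply, if_pos (hχS i hi)])
    (fun i hi => by rw [hsign, LinearMap.comp_apply, Submodule.mkQ_apply, if_neg (hχSc i hi)])
  have := imbalance_le_disc (χ ∘ₗ Submodule.mkQ _ + t • φ) V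
  omega

/-- The levels of `r` above `ρ` have zero sum, since `ρ` is chosen as the largest level with a
nonzero sum; so flipping the signs of `f` on them changes nothing. -/
theorem exists_level_sum_ne_zero_sum_sign_sub_mul_eq {κ : Type*} [Fintype κ] (r : κ → ℝ)
    (f : κ → ℤ) (hf : ∑ k, f k ≠ 0) :
    ∃ ρ : ℝ, ∑ k with r k = ρ, f k ≠ 0 ∧
      ∑ k, (SignType.sign (ρ - r k) : ℤ) * f k = ∑ k, f k - ∑ k with r k = ρ, f k := by
  set F : ℝ → ℤ := fun ρ => ∑ k with r k = ρ, f k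
  have hfiber : ∀ g : κ → ℤ, ∑ k, g k = ∑ ρ ∈ univ.image r, ∑ k with r k = ρ, g k := fun g =>
    (sum_fiberwise_of_maps_to (fun k _ => mem_image_of_mem r (mem_univ k)) g).symm
  have hU : ((univ.image r).filter fun ρ => F ρ ≠ 0).Nonempty := by
    by_contra! hU
    exact hf ((hfiber f).trans (sum_eq_zero fun ρ hρ => by
      simpa [F] using filter_eq_empty_iff.1 hU hρ))
  set ρ := ((univ.image r).filter fun ρ => F ρ ≠ 0).max' hU
  have hρ := mem_filter.1 (max'_mem _ hU)
  have habove : ∀ σ ∈ univ.image r, ρ < σ → F σ = 0 := fun σ hσ hlt => by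
    by_contra h
    exact hlt.not_ge (le_max' _ σ (mem_filter.2 ⟨hσ, h⟩))
  refine ⟨ρ, hρ.2, ?_⟩
  have hlevel : ∀ σ ∈ univ.image r,
      ∑ k with r k = σ, (SignType.sign (ρ - r k) : ℤ) * f k =
        F σ - if σ = ρ then F σ else 0 := by
    intro σ hσ
    rw [sum_congr rfl fun k hk => by rw [(mem_filter.1 hk).2], ← mul_sum]
    rcases lt_trichotomy σ ρ with h | rfl | h
    · rw [sign_pos (sub_pos.2 h), if_neg h.ne]; simp [F]
    · simp
    · have hσ0 : F σ = 0 := habove σ hσ h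
      simp only [F] at hσ0 ⊢
      simp [hσ0]
  rw [hfiber, sum_congr rfl hlevel, sum_sub_distrib, ← hfiber, sum_ite_eq' _ ρ F, if_pos hρ.1]

def lineIndices (V : ι → E) (u : E) : Finset ι := {i | V i ∈ ℝ ∙ u}

theorem span_image_lineIndices_le (V : ι → E) (u : E) :
    Submodule.span ℝ (V '' (lineIndices V u : Set ι)) ≤ ℝ ∙ u :=
  Submodule.span_le.2 <| by
    rintro _ ⟨i, hi, rfl⟩
    simpa [lineIndices] using hi

theorem linClosed_lineIndices (V : ι → E) (u : E) : LinClosed V (lineIndices V u) :=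
  fun i hi => by simpa [lineIndices] using span_image_lineIndices_le V u hi

theorem confRank_subfam_lineIndices {V : ι → E} {i₀ : ι} (hi₀ : V i₀ ≠ 0) :
    confRank (subfam V (lineIndices V (V i₀))) = 1 := by
  have hrange : Set.range (subfam V (lineIndices V (V i₀))) =
      V '' (lineIndices V (V i₀) : Set ι) := by
    ext; simp [subfam]
  have hmem : i₀ ∈ lineIndices V (V i₀) := by
    simp [lineIndices, Submodule.mem_span_singleton_self]
  rw [confRank, hrange, le_antisymm (span_image_lineIndices_le V (V i₀))
    ((Submodule.span_singleton_le_iff_mem _ _).2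
      (Submodule.subset_span (Set.mem_image_of_mem V hmem))), finrank_span_singleton hi₀]

theorem exists_dual_mem_span_singleton_iff_div_eq (φ : E →ₗ[ℝ] ℝ) (V : ι → E) :
    ∃ α : E →ₗ[ℝ] ℝ, ∀ i j, φ (V i) ≠ 0 → φ (V j) ≠ 0 →
      (V i ∈ ℝ ∙ V j ↔ α (V i) / φ (V i) = α (V j) / φ (V j)) := by
  obtain ⟨α, hα⟩ := exists_dual_forall_apply_ne_zero_of_ne_zero
    fun p : ι × ι => φ (V p.2) • V p.1 - φ (V p.1) • V p.2
  refine ⟨α, fun i j hi hj => ⟨fun hij => ?_, fun h => ?_⟩⟩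
  · obtain ⟨a, ha⟩ := Submodule.mem_span_singleton.1 hij
    have ha₀ : a ≠ 0 := by rintro rfl; exact hi (by rw [← ha, zero_smul, map_zero])
    simp only [← ha, map_smul, smul_eq_mul, mul_div_mul_left _ _ ha₀]
  · rw [div_eq_div_iff hi hj] at h
    have hij : φ (V j) • V i = φ (V i) • V j := sub_eq_zero.1 <| not_not.1 fun hne =>
      hα (i, j) hne <| by
        simp only [map_sub, map_smul, smul_eq_mul]
        linarith
    refine Submodule.mem_span_singleton.2 ⟨φ (V i) / φ (V j), ?_⟩
    rw [div_eq_inv_mul, mul_smul, ← hij, smul_smul, inv_mul_cancel₀ hj, one_smul]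

theorem imbalance_le_disc_contract {V : ι → E} {S : Finset ι} {ψ : E →ₗ[ℝ] ℝ}
    (hψ : ∀ i ∈ S, ψ (V i) = 0) : imbalance ψ V ≤ disc (contract V S) := by
  set ψq := (Submodule.span ℝ (V '' (S : Set ι))).liftQ ψ
    (Submodule.span_le.2 <| by rintro _ ⟨i, hi, rfl⟩; exact hψ i hi)
  have hsplit := imbalance_eq_imbalance_subfam_add_imbalance_contract (φ := ψ) (ψ := ψ)
    (χ := ψq) (fun _ _ => rfl) (fun i _ => by rw [Submodule.liftQ_apply])
  have hsub : imbalance ψ (subfam V S) = 0 := by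
    rw [imbalance_subfam]
    exact sum_eq_zero fun i hi => by rw [hψ i hi, sign_zero, SignType.coe_zero]
  have := imbalance_le_disc ψq (contract V S)
  omega

theorem exists_line_disc_le_disc_subfam_add_disc_contract {V : ι → E} (hV : 0 < disc V) :
    ∃ i₀, V i₀ ≠ 0 ∧ 0 < disc (subfam V (lineIndices V (V i₀))) ∧
      disc V ≤ disc (subfam V (lineIndices V (V i₀))) +
        disc (contract V (lineIndices V (V i₀))) := by
  obtain ⟨φ, hφ, hφ₀⟩ := exists_imbalance_eq_disc_forall_apply_ne_zero V
  obtain ⟨α, hα⟩ := exists_dual_mem_span_singleton_iff_div_eq φ V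
  set r : ι → ℝ := fun i => α (V i) / φ (V i)
  obtain ⟨ρ, hρ, hsum⟩ := exists_level_sum_ne_zero_sum_sign_sub_mul_eq r
    (fun i => (SignType.sign (φ (V i)) : ℤ)) (by rw [← imbalance, hφ]; omega)
  obtain ⟨i₀, hi₀, hφi₀⟩ := exists_ne_zero_of_sum_ne_zero hρ
  replace hφi₀ : φ (V i₀) ≠ 0 := fun h => hφi₀ (by rw [h, sign_zero, SignType.coe_zero])
  refine ⟨i₀, fun h => hφi₀ (by rw [h, map_zero]), ?_⟩
  set S := lineIndices V (V i₀)
  have hS : ∀ i, φ (V i) ≠ 0 → (V i ∈ ℝ ∙ V i₀ ↔ r i = ρ) := fun i hi => by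
    rw [hα i i₀ hi hφi₀, ← (mem_filter.1 hi₀).2]
  have hc : imbalance φ (subfam V S) = ∑ i with r i = ρ, (SignType.sign (φ (V i)) : ℤ) := by
    rw [imbalance_subfam]
    simp only [S, lineIndices, sum_filter]
    refine sum_congr rfl fun i _ => ?_
    by_cases h : φ (V i) = 0
    · simp [h]
    · rw [if_congr (hS i h) rfl rfl]
  set ψ : E →ₗ[ℝ] ℝ := ρ • φ - α
  have hψ : ∀ i, ψ (V i) = (ρ - r i) * φ (V i) := fun i => by
    by_cases hi : φ (V i) = 0
    · have : V i = 0 := not_not.1 fun h => hφ₀ i h hi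
      simp [ψ, this]
    · simp only [ψ, r, LinearMap.sub_apply, LinearMap.smul_apply, smul_eq_mul]
      field_simp
  have hψS : ∀ i ∈ S, ψ (V i) = 0 := fun i hi => by
    by_cases h : φ (V i) = 0
    · rw [hψ, h, mul_zero]
    · rw [hψ, (hS i h).1 (mem_filter.1 hi).2, sub_self, zero_mul]
  have hψV : imbalance ψ V = disc V - imbalance φ (subfam V S) := by
    rw [hc, ← hφ, imbalance, imbalance, ← hsum]
    exact sum_congr rfl fun i _ => by rw [hψ, sign_mul, SignType.coe_mul]
  have h₁ := imbalance_le_disc ψ V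
  have h₂ := imbalance_le_disc φ (subfam V S)
  have h₃ := imbalance_le_disc_contract hψS
  have hc₀ : imbalance φ (subfam V S) ≠ 0 := hc ▸ hρ
  constructor <;> omega

theorem exists_rank_one_extremal_subfam_general {E : Type*} [AddCommGroup E] [Module ℝ E]
    {ι : Type*} [Fintype ι] (V : ι → E) (hV : 0 < disc V) :
    ∃ S : Finset ι, LinClosed V S ∧ confRank (subfam V S) = 1 ∧
      0 < disc (subfam V S) ∧
      disc V = disc (subfam V S) + disc (contract V S) := by
  obtain ⟨i₀, hi₀, hpos, hle⟩ := exists_line_disc_le_disc_subfam_add_disc_contract hV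
  have hclosed := linClosed_lineIndices V (V i₀)
  exact ⟨lineIndices V (V i₀), hclosed, confRank_subfam_lineIndices hi₀, hpos,
    le_antisymm hle (disc_subfam_add_disc_contract_le hclosed)⟩

/-- if `disc V > 0` there is a rank-1 linearly closed subfamily `W` with
`disc W > 0` and `disc V = disc W + disc (V/W)`. -/
theorem exists_rank_one_extremal_subfam {E : Type*} [AddCommGroup E] [Module ℝ E]
    [FiniteDimensional ℝ E] (hE : 1 ≤ Module.finrank ℝ E)
    {ι : Type*} [Fintype ι] (V : ι → E) (hV : 0 < disc V) :
    ∃ S : Finset ι, LinClosed V S ∧ confRank (subfam V S) = 1 ∧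
      0 < disc (subfam V S) ∧
      disc V = disc (subfam V S) + disc (contract V S) :=
  exists_rank_one_extremal_subfam_general V hV

end
end

section
/- Let V be a vector configuration of rank r in a finite-dimensional real vector space E with dim E ≥ 1. For every integer s with 1 ≤ s ≤ r − 1 there exists a subfamily W of V of rank s that is linearly closed in V and satisfies disc(V) = disc(W) + disc(V/W) and disc(W) ≥ min(disc(V), s). -/
open scoped Classical

noncomputable section

variable {E : Type*} [AddCommGroup E] [Module ℝ E] {ι : Type*} [Fintype ι]

/-!
The discrepancy of `V/X` is the largest `|∑ᵢ sign φ(vᵢ)|` over functionals `φ` on `E` vanishing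
on `V|X`, so all contractions can be handled inside `E`. Perturbing an optimal functional of `V/W`, chosen nonzero off `W`, by a small
multiple of an optimal functional of `W` gives `disc W + disc (V/W) ≤ disc V` for every linearly
closed `W`.

The reverse inequality and the bound `disc W ≥ min (disc V) s` come from building `W` one rank at
a time. Let `φ` be optimal for `V/X` and nonzero off `X`, and rotate it in a generic pencil
`φ - tθ`. As `t` grows from `0`, the sign of `φ(vᵢ)` flips when `t` passes the ratio
`φ(vᵢ)/θ(vᵢ)`, and the indices sharing a ratio form a rank-one extension `L` of `X`. Stopping at
the first `L` whose signed count `d` is nonzero loses nothing on the levels passed before it, so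
`disc (V/L) ≥ disc (V/X) - d`, while `±φ` has count `|d| ≥ 1` on `L`. Lexicographic combinations
of these functionals along the flag certify both inequalities for the final flat.
-/

open Module Submodule Finset Filter Topology

namespace VectorConfig

section SignedCount

variable {κ F : Type*} [AddCommGroup F] [Module ℝ F]

def signedCount (φ : F →ₗ[ℝ] ℝ) (V : κ → F) (A : Finset κ) : ℤ :=
  ∑ i ∈ A, (SignType.sign (φ (V i)) : ℤ)

theorem posCount_sub_negCount [Fintype κ] (φ : F →ₗ[ℝ] ℝ) (V : κ → F) :
    (posCount φ V : ℤ) - negCount φ V = signedCount φ V univ := by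
  have hsign : ∀ a : ℝ,
      (SignType.sign a : ℤ) = (if 0 < a then 1 else 0) - (if a < 0 then 1 else 0) := by
    intro a
    rcases lt_trichotomy a 0 with h | rfl | h
    · simp [sign_neg h, h, h.not_gt]
    · simp
    · simp [sign_pos h, h, h.not_gt]
  simp only [posCount, negCount, signedCount, hsign, sum_sub_distrib, card_filter, Nat.cast_sum,
    Nat.cast_ite, Nat.cast_one, Nat.cast_zero]

theorem signedCount_neg (φ : F →ₗ[ℝ] ℝ) (V : κ → F) (A : Finset κ) :
    signedCount (-φ) V A = -signedCount φ V A := by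
  simp [signedCount, Left.sign_neg]

theorem natAbs_signedCount_le (φ : F →ₗ[ℝ] ℝ) (V : κ → F) (A : Finset κ) :
    (signedCount φ V A).natAbs ≤ #A := by
  refine (Int.natAbs_sum_le _ _).trans ?_
  calc ∑ i ∈ A, ((SignType.sign (φ (V i)) : ℤ)).natAbs ≤ ∑ _i ∈ A, 1 :=
        sum_le_sum fun i _ => by
          rcases SignType.trichotomy (SignType.sign (φ (V i))) with h | h | h <;> simp [h]
    _ = #A := by simp

theorem signedCount_subfam [Fintype κ] (φ : F →ₗ[ℝ] ℝ) (V : κ → F) (S : Finset κ) :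
    signedCount φ (subfam V S) univ = signedCount φ V S :=
  sum_coe_sort S fun i => (SignType.sign (φ (V i)) : ℤ)

theorem exists_sign_add_smul_apply [Finite κ] (f g : F →ₗ[ℝ] ℝ) (V : κ → F) :
    ∃ x : ℝ, 0 < x ∧ ∀ i, SignType.sign ((f + x • g) (V i)) =
      if f (V i) = 0 then SignType.sign (g (V i)) else SignType.sign (f (V i)) := by
  have key : ∀ i, ∀ᶠ x in 𝓝[>] (0 : ℝ), SignType.sign (f (V i) + x * g (V i)) =
      if f (V i) = 0 then SignType.sign (g (V i)) else SignType.sign (f (V i)) := by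
    intro i
    split_ifs with hf
    · filter_upwards [self_mem_nhdsWithin] with x hx
      rw [hf, zero_add, sign_mul, sign_pos hx, one_mul]
    · have hc : ContinuousAt (fun x : ℝ => SignType.sign (f (V i) + x * g (V i))) 0 :=
        (continuousAt_sign_of_ne_zero (by simpa using hf)).comp (by fun_prop)
      have := tendsto_pure.1 (nhds_discrete SignType ▸ hc.tendsto)
      simpa using eventually_nhdsWithin_of_eventually_nhds this
  obtain ⟨x, hx, hpos⟩ := ((eventually_all.2 key).and self_mem_nhdsWithin).exists
  exact ⟨x, hpos, fun i => by simpa using hx i⟩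

variable {ψ f g : F →ₗ[ℝ] ℝ} {V : κ → F}

theorem signedCount_eq_add_of_sign_eq
    (h : ∀ i, SignType.sign (ψ (V i)) =
      if f (V i) = 0 then SignType.sign (g (V i)) else SignType.sign (f (V i)))
    (A : Finset κ) :
    signedCount ψ V A = signedCount f V A + signedCount g V (A.filter fun i => f (V i) = 0) := by
  simp only [signedCount, h, sum_filter, ← sum_add_distrib]
  refine sum_congr rfl fun i _ => ?_
  split_ifs with hf <;> simp [hf]

theorem apply_eq_zero_iff_of_sign_eq
    (h : ∀ i, SignType.sign (ψ (V i)) =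
      if f (V i) = 0 then SignType.sign (g (V i)) else SignType.sign (f (V i))) (i : κ) :
    ψ (V i) = 0 ↔ f (V i) = 0 ∧ g (V i) = 0 := by
  rw [← sign_eq_zero_iff, h i]
  split_ifs with hf <;> simp [hf, sign_eq_zero_iff]

end SignedCount

section RelDisc

variable {κ F : Type*} [AddCommGroup F] [Module ℝ F]

/-- `relDisc V X univ` is the discrepancy of the contraction `V/(V|X)`, and `relDisc V ∅ A` that
of the subfamily `V|A`. -/
def relDisc (V : κ → F) (X A : Finset κ) : ℕ :=
  sSup {k | ∃ φ : F →ₗ[ℝ] ℝ, (∀ i ∈ X, φ (V i) = 0) ∧ k = (signedCount φ V A).natAbs}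

theorem bddAbove_natAbs_signedCount (V : κ → F) (X A : Finset κ) :
    BddAbove {k | ∃ φ : F →ₗ[ℝ] ℝ, (∀ i ∈ X, φ (V i) = 0) ∧ k = (signedCount φ V A).natAbs} :=
  ⟨#A, by rintro k ⟨φ, -, rfl⟩; exact natAbs_signedCount_le φ V A⟩

theorem natAbs_signedCount_le_relDisc {V : κ → F} {X : Finset κ} {φ : F →ₗ[ℝ] ℝ}
    (hφ : ∀ i ∈ X, φ (V i) = 0) (A : Finset κ) :
    (signedCount φ V A).natAbs ≤ relDisc V X A :=
  le_csSup (bddAbove_natAbs_signedCount V X A) ⟨φ, hφ, rfl⟩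

theorem signedCount_le_relDisc {V : κ → F} {X : Finset κ} {φ : F →ₗ[ℝ] ℝ}
    (hφ : ∀ i ∈ X, φ (V i) = 0) (A : Finset κ) :
    signedCount φ V A ≤ relDisc V X A :=
  Int.le_natAbs.trans (by exact_mod_cast natAbs_signedCount_le_relDisc hφ A)

theorem exists_signedCount_eq_relDisc (V : κ → F) (X A : Finset κ) :
    ∃ φ : F →ₗ[ℝ] ℝ, (∀ i ∈ X, φ (V i) = 0) ∧ signedCount φ V A = relDisc V X A := by
  have hbdd := bddAbove_natAbs_signedCount V X A
  obtain ⟨φ, hφ, hmax⟩ := Nat.sSup_mem (by exact ⟨_, 0, by simp, rfl⟩) hbdd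
  rw [← relDisc] at hmax
  rcases Int.natAbs_eq (signedCount φ V A) with h | h
  · exact ⟨φ, hφ, by rw [hmax, ← h]⟩
  · refine ⟨-φ, fun i hi => by simp [hφ i hi], ?_⟩
    rw [signedCount_neg, hmax]
    omega

theorem relDisc_eq_relDisc_empty {V : κ → F} {X : Finset κ} (hX : ∀ i ∈ X, V i = 0)
    (A : Finset κ) : relDisc V X A = relDisc V ∅ A := by
  simp +contextual [relDisc, hX]

variable [Fintype κ]

theorem disc_eq_relDisc (V : κ → F) : disc V = relDisc V ∅ univ := by
  simp [disc, relDisc, posCount_sub_negCount]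

theorem disc_subfam (V : κ → F) (S : Finset κ) : disc (subfam V S) = relDisc V ∅ S := by
  simp only [disc_eq_relDisc, relDisc, signedCount_subfam, notMem_empty, IsEmpty.forall_iff,
    implies_true, true_and]

theorem signedCount_contract (V : κ → F) (S : Finset κ)
    (ψ : (F ⧸ span ℝ (V '' (S : Set κ))) →ₗ[ℝ] ℝ) :
    signedCount ψ (contract V S) univ =
      signedCount (ψ ∘ₗ (span ℝ (V '' (S : Set κ))).mkQ) V univ := by
  have hS : ∀ i : {i // i ∈ S},
      (SignType.sign ((ψ ∘ₗ (span ℝ (V '' (S : Set κ))).mkQ) (V i)) : ℤ) = 0 := fun i => by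
    simp [(Submodule.Quotient.mk_eq_zero _).2 (subset_span (Set.mem_image_of_mem V i.2))]
  rw [signedCount, signedCount, ← Fintype.sum_subtype_add_sum_subtype (· ∈ S),
    sum_eq_zero fun i _ => hS i, zero_add]
  rfl

theorem disc_contract (V : κ → F) (S : Finset κ) : disc (contract V S) = relDisc V S univ := by
  rw [disc_eq_relDisc, relDisc, relDisc]
  congr 1
  ext k
  simp only [Set.mem_ofPred_eq, notMem_empty, IsEmpty.forall_iff, implies_true, true_and,
    signedCount_contract]
  constructor
  · rintro ⟨ψ, rfl⟩
    refine ⟨_, fun i hi => ?_, rfl⟩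
    simp [(Submodule.Quotient.mk_eq_zero _).2 (subset_span (Set.mem_image_of_mem V hi))]
  · rintro ⟨φ, hφ, rfl⟩
    have hker : span ℝ (V '' (S : Set κ)) ≤ LinearMap.ker φ := by
      rw [span_le]
      rintro _ ⟨i, hi, rfl⟩
      exact hφ i hi
    exact ⟨(span ℝ _).liftQ φ hker, by rw [liftQ_mkQ]⟩

end RelDisc

theorem confRank_subfam {κ F : Type*} [AddCommGroup F] [Module ℝ F] (V : κ → F)
    (S : Finset κ) : confRank (subfam V S) = finrank ℝ (span ℝ (V '' (S : Set κ))) := by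
  have hrange : Set.range (subfam V S) = V '' S := by ext; simp [subfam]
  rw [confRank, hrange]

theorem exists_dual_eq_zero_and_ne_zero {K M τ : Type*} [Field K] [Infinite K] [AddCommGroup M]
    [Module K M] [Finite τ] (N : Submodule K M) (w : τ → M) (hw : ∀ t, w t ∉ N) :
    ∃ θ : Module.Dual K M, (∀ n ∈ N, θ n = 0) ∧ ∀ t, θ (w t) ≠ 0 := by
  obtain ⟨θ, hθN, hθw⟩ := Module.Dual.exists_forall_mem_ne_zero_of_forall_exists
    N.dualAnnihilator (fun t => Module.Dual.eval K M (w t)) fun t => by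
      obtain ⟨f, hf, hmap⟩ := N.exists_dual_map_eq_bot_of_notMem (hw t) inferInstance
      refine ⟨f, (mem_dualAnnihilator f).2 fun n hn => ?_, hf⟩
      rw [← Submodule.mem_bot K, ← hmap]
      exact mem_map_of_mem hn
  exact ⟨θ, (mem_dualAnnihilator θ).1 hθN, hθw⟩

section Crossing

variable {κ : Type*} [Fintype κ]

def levelSum (p q : κ → ℝ) (t : ℝ) : ℤ :=
  ∑ i with p i / q i = t, (SignType.sign (p i) : ℤ)

theorem sign_sub_mul_eq {p q t : ℝ} (hpq : p = 0 ↔ q = 0) (ht : 0 < t) :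
    (SignType.sign (p - t * q) : ℤ) = SignType.sign p
      - (if 0 < p / q ∧ p / q < t then 2 * (SignType.sign p : ℤ) else 0)
      - (if p / q = t then (SignType.sign p : ℤ) else 0) := by
  by_cases hq : q = 0
  · simp [hq, hpq.2 hq, ht.ne]
  obtain ⟨r, rfl⟩ : ∃ r, p = r * q := ⟨p / q, (div_mul_cancel₀ p hq).symm⟩
  rw [mul_div_cancel_right₀ r hq, show r * q - t * q = (r - t) * q by ring, sign_mul, sign_mul]
  rcases lt_trichotomy r 0 with hr | rfl | hr
  · simp [hr.not_gt, (hr.trans ht).ne, sign_neg hr, sign_neg (by linarith : r - t < 0)]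
  · simp at hpq; exact absurd hpq hq
  rcases lt_trichotomy r t with hrt | rfl | hrt
  · simp [hr, hrt, hrt.ne, sign_pos hr, sign_neg (by linarith : r - t < 0)]; ring
  · simp [hr]
  · simp [hr, hrt.not_gt, hrt.ne', sign_pos hr, sign_pos (by linarith : 0 < r - t)]

theorem exists_first_crossing (p q : κ → ℝ) (hpq : ∀ i, p i = 0 ↔ q i = 0)
    (h : ∃ i, 0 < p i / q i ∧ levelSum p q (p i / q i) ≠ 0) :
    ∃ j, 0 < p j / q j ∧ levelSum p q (p j / q j) ≠ 0 ∧
      ∑ i, (SignType.sign (p i - p j / q j * q i) : ℤ) =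
        ∑ i, (SignType.sign (p i) : ℤ) - levelSum p q (p j / q j) := by
  set P := univ.filter fun i => 0 < p i / q i ∧ levelSum p q (p i / q i) ≠ 0
  have hP : (P.image fun i => p i / q i).Nonempty := by
    obtain ⟨i, hi⟩ := h
    exact ⟨_, mem_image_of_mem _ (by simpa [P] using hi)⟩
  obtain ⟨j, hjP, hj⟩ := mem_image.1 (min'_mem _ hP)
  obtain ⟨hjpos, hjlevel⟩ : 0 < p j / q j ∧ levelSum p q (p j / q j) ≠ 0 := by simpa [P] using hjP
  have hbelow : ∀ i, 0 < p i / q i → p i / q i < p j / q j → levelSum p q (p i / q i) = 0 := by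
    intro i hi hij
    by_contra hne
    have := min'_le _ _ (mem_image_of_mem (fun i => p i / q i) (by simp [P, hi, hne] : i ∈ P))
    rw [← hj] at this
    exact this.not_gt hij
  -- the signs that flip between `t = 0` and `t = p j / q j` sum to zero, level by level
  have hcrossed :
      ∑ i with 0 < p i / q i ∧ p i / q i < p j / q j, (SignType.sign (p i) : ℤ) = 0 := by
    rw [← sum_fiberwise_of_maps_to fun i hi => mem_image_of_mem (fun i => p i / q i) hi]
    refine sum_eq_zero fun y hy => ?_
    obtain ⟨i, hi, rfl⟩ := mem_image.1 hy
    obtain ⟨hi₀, hij⟩ := (mem_filter.1 hi).2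
    rw [← hbelow i hi₀ hij, levelSum, filter_filter]
    congr 1
    ext k
    simp only [mem_filter, mem_univ, true_and, and_iff_right_iff_imp]
    intro hk
    rw [hk]
    exact ⟨hi₀, hij⟩
  refine ⟨j, hjpos, hjlevel, ?_⟩
  simp only [sign_sub_mul_eq (hpq _) hjpos, sum_sub_distrib, ← sum_filter, ← mul_sum, hcrossed,
    levelSum]
  ring

theorem levelSum_neg (p q : κ → ℝ) (t : ℝ) : levelSum p (-q) (-t) = levelSum p q t := by
  simp [levelSum, div_neg]

theorem exists_crossing (p q : κ → ℝ) (hpq : ∀ i, p i = 0 ↔ q i = 0)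
    (hsum : ∑ i, (SignType.sign (p i) : ℤ) ≠ 0) :
    ∃ j, p j ≠ 0 ∧ levelSum p q (p j / q j) ≠ 0 ∧
      ∑ i, (SignType.sign (p i - p j / q j * q i) : ℤ) =
        ∑ i, (SignType.sign (p i) : ℤ) - levelSum p q (p j / q j) := by
  obtain ⟨i, hi⟩ : ∃ i, levelSum p q (p i / q i) ≠ 0 := by
    rw [← sum_fiberwise_of_maps_to fun i _ => mem_image_of_mem (fun i => p i / q i) (mem_univ i)]
      at hsum
    obtain ⟨y, hy, hne⟩ := exists_ne_zero_of_sum_ne_zero hsum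
    obtain ⟨i, -, rfl⟩ := mem_image.1 hy
    exact ⟨i, hne⟩
  have hi₀ : p i / q i ≠ 0 := by
    intro h0
    refine hi (h0 ▸ sum_eq_zero fun k hk => ?_)
    rcases div_eq_zero_iff.1 (mem_filter.1 hk).2 with h | h
    · simp [h]
    · simp [(hpq k).2 h]
  rcases hi₀.lt_or_gt with hneg | hpos
  · obtain ⟨j, hj, hjlevel, hjsum⟩ := exists_first_crossing p (-q) (by simpa using hpq)
      ⟨i, by simpa [div_neg] using hneg, by simpa [div_neg, levelSum_neg] using hi⟩
    refine ⟨j, fun h => by simp [h] at hj, by simpa [div_neg, levelSum_neg] using hjlevel, ?_⟩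
    simpa [div_neg, levelSum_neg] using hjsum
  · obtain ⟨j, hj, hjlevel, hjsum⟩ := exists_first_crossing p q hpq ⟨i, hpos, hi⟩
    exact ⟨j, fun h => by simp [h] at hj, hjlevel, hjsum⟩

end Crossing

variable {κ F : Type*} [AddCommGroup F] [Module ℝ F] [Fintype κ] {V : κ → F} {X : Finset κ}

theorem exists_apply_eq_zero_iff (hX : LinClosed V X) :
    ∃ θ : F →ₗ[ℝ] ℝ, ∀ i, θ (V i) = 0 ↔ i ∈ X := by
  obtain ⟨θ, hθN, hθw⟩ := exists_dual_eq_zero_and_ne_zero (span ℝ (V '' X))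
    (fun i : {i // i ∉ X} => V i) fun i hi => i.2 (hX i hi)
  exact ⟨θ, fun i => ⟨fun h => by_contra fun hi => hθw ⟨i, hi⟩ h,
    fun hi => hθN _ (subset_span (Set.mem_image_of_mem V hi))⟩⟩

theorem exists_pencil_generic (hX : LinClosed V X) {φ : F →ₗ[ℝ] ℝ}
    (hφ : ∀ i, φ (V i) = 0 ↔ i ∈ X) :
    ∃ θ : F →ₗ[ℝ] ℝ, (∀ i, θ (V i) = 0 ↔ i ∈ X) ∧ ∀ i j, i ∉ X → j ∉ X →
      φ (V i) * θ (V j) = φ (V j) * θ (V i) → V i ∈ span ℝ (V '' X) ⊔ ℝ ∙ V j := by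
  set N := span ℝ (V '' X)
  -- `θ (w (i, j)) = 0` says exactly that `φ / θ` takes the same value at `vᵢ` and `vⱼ`
  let w : {i // i ∉ X} ⊕ {p : κ × κ // p.2 ∉ X ∧ V p.1 ∉ N ⊔ ℝ ∙ V p.2} → F :=
    Sum.elim (fun i => V i) fun p => φ (V p.1.2) • V p.1.1 - φ (V p.1.1) • V p.1.2
  have hw : ∀ t, w t ∉ N := by
    rintro (⟨i, hi⟩ | ⟨⟨i, j⟩, hj, hij⟩) hN
    · exact hi (hX i hN)
    · have hsmul : φ (V j) • V i ∈ N ⊔ ℝ ∙ V j := by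
        convert add_mem (mem_sup_left hN) (mem_sup_right (smul_mem _ (φ (V i))
          (mem_span_singleton_self (V j)))) using 1
        simp [w]
      exact hij ((smul_mem_iff _ (mt (hφ j).1 hj)).1 hsmul)
  obtain ⟨θ, hθN, hθw⟩ := exists_dual_eq_zero_and_ne_zero N w hw
  refine ⟨θ, fun i => ⟨fun h => by_contra fun hi => hθw (.inl ⟨i, hi⟩) h,
    fun hi => hθN _ (subset_span (Set.mem_image_of_mem V hi))⟩, fun i j _ hj heq => ?_⟩
  by_contra hij
  apply hθw (.inr ⟨(i, j), hj, hij⟩)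
  simp only [w, Sum.elim_inr, map_sub, map_smul, smul_eq_mul]
  linarith

theorem exists_signedCount_eq_relDisc_of_linClosed (hX : LinClosed V X) :
    ∃ φ : F →ₗ[ℝ] ℝ, (∀ i, φ (V i) = 0 ↔ i ∈ X) ∧ signedCount φ V univ = relDisc V X univ := by
  obtain ⟨φ₀, hφ₀, hmax⟩ := exists_signedCount_eq_relDisc V X univ
  obtain ⟨θ, hθ⟩ := exists_apply_eq_zero_iff hX
  obtain ⟨x, -, hx⟩ := exists_sign_add_smul_apply φ₀ θ V
  obtain ⟨y, -, hy⟩ := exists_sign_add_smul_apply φ₀ (-θ) V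
  have hle₁ := signedCount_le_relDisc (X := X)
    (fun i hi => (apply_eq_zero_iff_of_sign_eq hx i).2 ⟨hφ₀ i hi, (hθ i).2 hi⟩) univ
  have hle₂ := signedCount_le_relDisc (X := X)
    (fun i hi => (apply_eq_zero_iff_of_sign_eq hy i).2 ⟨hφ₀ i hi, by simp [(hθ i).2 hi]⟩) univ
  -- `±θ` shift the optimal count by `±` the count of `θ` on the zeros of `φ₀`, which must vanish
  rw [signedCount_eq_add_of_sign_eq hx] at hle₁
  rw [signedCount_eq_add_of_sign_eq hy, signedCount_neg] at hle₂
  refine ⟨φ₀ + x • θ, fun i => ?_, by rw [signedCount_eq_add_of_sign_eq hx]; omega⟩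
  rw [apply_eq_zero_iff_of_sign_eq hx, hθ]
  exact ⟨And.right, fun hi => ⟨hφ₀ i hi, hi⟩⟩

theorem relDisc_add_relDisc_le {Y : Finset κ} (hXY : X ⊆ Y) (hY : LinClosed V Y) :
    relDisc V X Y + relDisc V Y univ ≤ relDisc V X univ := by
  obtain ⟨α, hα, hαmax⟩ := exists_signedCount_eq_relDisc V X Y
  obtain ⟨ψ, hψ, hψmax⟩ := exists_signedCount_eq_relDisc_of_linClosed hY
  obtain ⟨x, -, hx⟩ := exists_sign_add_smul_apply ψ α V
  have hle := signedCount_le_relDisc (X := X)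
    (fun i hi => (apply_eq_zero_iff_of_sign_eq hx i).2 ⟨(hψ i).2 (hXY hi), hα i hi⟩) univ
  have hzeros : univ.filter (fun i => ψ (V i) = 0) = Y := by ext i; simp [hψ]
  rw [signedCount_eq_add_of_sign_eq hx, hψmax, hzeros, hαmax] at hle
  omega

def closureInsert (V : κ → F) (X : Finset κ) (j : κ) : Finset κ :=
  univ.filter fun i => V i ∈ span ℝ (V '' X) ⊔ ℝ ∙ V j

theorem subset_closureInsert (j : κ) : X ⊆ closureInsert V X j := fun i hi => by
  simp [closureInsert, mem_sup_left (subset_span (Set.mem_image_of_mem V hi))]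

theorem mem_closureInsert_self (j : κ) : j ∈ closureInsert V X j := by
  simp [closureInsert, mem_sup_right (mem_span_singleton_self (V j))]

theorem span_image_closureInsert (j : κ) :
    span ℝ (V '' closureInsert V X j) = span ℝ (V '' X) ⊔ ℝ ∙ V j := by
  refine le_antisymm (span_le.2 ?_) (sup_le (span_mono (Set.image_mono ?_)) ?_)
  · rintro _ ⟨i, hi, rfl⟩
    exact (mem_filter.1 hi).2
  · exact_mod_cast subset_closureInsert j
  · exact span_le.2 (Set.singleton_subset_iff.2 (subset_span
      (Set.mem_image_of_mem V (mem_closureInsert_self j))))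

theorem linClosed_closureInsert (j : κ) : LinClosed V (closureInsert V X j) := fun i hi => by
  rw [span_image_closureInsert] at hi
  simp [closureInsert, hi]

theorem finrank_closureInsert [FiniteDimensional ℝ F] {j : κ} (hj : V j ∉ span ℝ (V '' X)) :
    finrank ℝ (span ℝ (V '' closureInsert V X j)) = finrank ℝ (span ℝ (V '' X)) + 1 := by
  rw [span_image_closureInsert, finrank_sup_span_singleton hj]

theorem apply_sub_smul_eq_zero_of_mem_closureInsert {φ θ : F →ₗ[ℝ] ℝ}
    (hφ : ∀ i ∈ X, φ (V i) = 0) (hθ : ∀ i ∈ X, θ (V i) = 0) {j : κ} (hθj : θ (V j) ≠ 0)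
    {i : κ} (hi : i ∈ closureInsert V X j) : (φ - (φ (V j) / θ (V j)) • θ) (V i) = 0 := by
  have hker : span ℝ (V '' closureInsert V X j) ≤
      LinearMap.ker (φ - (φ (V j) / θ (V j)) • θ) := by
    rw [span_image_closureInsert, sup_le_iff, span_le, span_singleton_le_iff_mem]
    constructor
    · rintro _ ⟨k, hk, rfl⟩
      simp [hφ k hk, hθ k hk]
    · simp [div_mul_cancel₀ _ hθj]
  exact hker (subset_span (Set.mem_image_of_mem V hi))

theorem levelSum_eq_signedCount_closureInsert {φ θ : F →ₗ[ℝ] ℝ}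
    (hφ : ∀ i, φ (V i) = 0 ↔ i ∈ X) (hθ : ∀ i, θ (V i) = 0 ↔ i ∈ X)
    (hpencil : ∀ i j, i ∉ X → j ∉ X →
      φ (V i) * θ (V j) = φ (V j) * θ (V i) → V i ∈ span ℝ (V '' X) ⊔ ℝ ∙ V j)
    {j : κ} (hj : j ∉ X) :
    levelSum (fun i => φ (V i)) (fun i => θ (V i)) (φ (V j) / θ (V j)) =
      signedCount φ V (closureInsert V X j) := by
  have hφj : φ (V j) ≠ 0 := mt (hφ j).1 hj
  have hθj : θ (V j) ≠ 0 := mt (hθ j).1 hj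
  rw [signedCount, ← sum_filter_of_ne (p := fun i => i ∉ X) fun i _ h => ?_, levelSum]
  · congr 1
    ext i
    simp only [mem_filter, mem_univ, true_and]
    constructor
    · intro hi
      have hiX : i ∉ X := fun hiX =>
        div_ne_zero hφj hθj (by simp [(hφ i).2 hiX] at hi; exact hi.symm)
      have hline := hpencil i j hiX hj ((div_eq_div_iff (mt (hθ i).1 hiX) hθj).1 hi)
      exact ⟨by simpa [closureInsert] using hline, hiX⟩
    · rintro ⟨hiY, hiX⟩
      have := apply_sub_smul_eq_zero_of_mem_closureInsert (fun k hk => (hφ k).2 hk)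
        (fun k hk => (hθ k).2 hk) hθj hiY
      simp only [LinearMap.sub_apply, LinearMap.smul_apply, smul_eq_mul, sub_eq_zero] at this
      rw [this, mul_div_cancel_right₀ _ (mt (hθ i).1 hiX)]
  · exact fun hiX => h (by simp [(hφ i).2 hiX])

theorem exists_crossing_closureInsert (hX : LinClosed V X) (hD : relDisc V X univ ≠ 0) :
    ∃ j ∉ X, ∃ φ : F →ₗ[ℝ] ℝ, (∀ i, φ (V i) = 0 ↔ i ∈ X) ∧
      signedCount φ V (closureInsert V X j) ≠ 0 ∧
      relDisc V X univ - signedCount φ V (closureInsert V X j) ≤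
        relDisc V (closureInsert V X j) univ := by
  obtain ⟨φ, hφ, hmax⟩ := exists_signedCount_eq_relDisc_of_linClosed hX
  obtain ⟨θ, hθ, hpencil⟩ := exists_pencil_generic hX hφ
  have hpq : ∀ i, φ (V i) = 0 ↔ θ (V i) = 0 := fun i => (hφ i).trans (hθ i).symm
  obtain ⟨j, hj, hlevel, hsum⟩ := exists_crossing (fun i => φ (V i)) (fun i => θ (V i)) hpq
    (by rw [← signedCount, hmax]; exact_mod_cast hD)
  have hjX : j ∉ X := mt (hφ j).2 hj
  have hlevelY := levelSum_eq_signedCount_closureInsert hφ hθ hpencil hjX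
  have hle := signedCount_le_relDisc (fun i hi => apply_sub_smul_eq_zero_of_mem_closureInsert
    (fun k hk => (hφ k).2 hk) (fun k hk => (hθ k).2 hk) (mt (hθ j).1 hjX) hi) univ
  have hψ : signedCount (φ - (φ (V j) / θ (V j)) • θ) V univ =
      ∑ i, (SignType.sign (φ (V i) - φ (V j) / θ (V j) * θ (V i)) : ℤ) := by
    simp [signedCount]
  rw [hψ, hsum, ← signedCount, hmax, hlevelY] at hle
  exact ⟨j, hjX, φ, hφ, hlevelY ▸ hlevel, hle⟩

theorem exists_notMem_span_of_finrank_lt [FiniteDimensional ℝ F]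
    (h : finrank ℝ (span ℝ (V '' X)) < confRank V) : ∃ j, V j ∉ span ℝ (V '' X) := by
  by_contra! hall
  exact h.not_ge (Submodule.finrank_mono (span_le.2 (Set.range_subset_iff.2 hall)))

theorem exists_closureInsert_le [FiniteDimensional ℝ F] (hX : LinClosed V X)
    (hrank : finrank ℝ (span ℝ (V '' X)) < confRank V) :
    ∃ j, V j ∉ span ℝ (V '' X) ∧ ∃ γ : F →ₗ[ℝ] ℝ, (∀ i, γ (V i) = 0 ↔ i ∈ X) ∧
      min (relDisc V X univ : ℤ) 1 ≤ |signedCount γ V (closureInsert V X j)| ∧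
      (relDisc V X univ : ℤ) ≤
        |signedCount γ V (closureInsert V X j)| + relDisc V (closureInsert V X j) univ := by
  rcases eq_or_ne (relDisc V X univ) 0 with hD | hD
  · obtain ⟨j, hj⟩ := exists_notMem_span_of_finrank_lt hrank
    obtain ⟨θ, hθ⟩ := exists_apply_eq_zero_iff hX
    exact ⟨j, hj, θ, hθ, by simp [hD], by simp only [hD, Nat.cast_zero]; positivity⟩
  · obtain ⟨j, hj, φ, hφ, hne, hle⟩ := exists_crossing_closureInsert hX hD
    refine ⟨j, fun h => hj (hX j h), φ, hφ, ?_, ?_⟩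
    · have := Int.one_le_abs hne
      omega
    · have := le_abs_self (signedCount φ V (closureInsert V X j))
      omega

/-- `α` certifies that the flat `V|Y` above `V|X` carries at least `min (disc (V/X)) s` of the
discrepancy of `V/X`, and that what it does not carry survives in `V/Y`. -/
structure IsDiscExtension (V : κ → F) (X Y : Finset κ) (α : F →ₗ[ℝ] ℝ) (s : ℕ) : Prop where
  subset : X ⊆ Y
  linClosed : LinClosed V Y
  finrank_span : finrank ℝ (span ℝ (V '' Y)) = finrank ℝ (span ℝ (V '' X)) + s
  apply_eq_zero : ∀ i ∈ X, α (V i) = 0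
  apply_ne_zero : ∀ i ∈ Y, i ∉ X → α (V i) ≠ 0
  min_le : min (relDisc V X univ : ℤ) s ≤ signedCount α V Y
  le_add : (relDisc V X univ : ℤ) ≤ signedCount α V Y + relDisc V Y univ

theorem IsDiscExtension.refl (hX : LinClosed V X) : IsDiscExtension V X X 0 0 where
  subset := subset_rfl
  linClosed := hX
  finrank_span := rfl
  apply_eq_zero _ _ := rfl
  apply_ne_zero _ hi hi' := absurd hi hi'
  min_le := by simp [signedCount]
  le_add := by simp [signedCount]

theorem IsDiscExtension.trans {Y Z : Finset κ} {α β : F →ₗ[ℝ] ℝ} {s t : ℕ}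
    (h₁ : IsDiscExtension V X Y α s) (h₂ : IsDiscExtension V Y Z β t) :
    ∃ γ, IsDiscExtension V X Z γ (s + t) := by
  obtain ⟨x, -, hx⟩ := exists_sign_add_smul_apply β α V
  have hzeros : Z.filter (fun i => β (V i) = 0) = Y := by
    ext i
    simp only [mem_filter]
    exact ⟨fun ⟨hiZ, hβ⟩ => by_contra fun hiY => h₂.apply_ne_zero i hiZ hiY hβ,
      fun hiY => ⟨h₂.subset hiY, h₂.apply_eq_zero i hiY⟩⟩
  have hcount : signedCount (β + x • α) V Z = signedCount β V Z + signedCount α V Y := by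
    rw [signedCount_eq_add_of_sign_eq hx, hzeros]
  have := h₁.min_le
  have := h₁.le_add
  have := h₂.min_le
  have := h₂.le_add
  refine ⟨β + x • α, h₁.subset.trans h₂.subset, h₂.linClosed,
    by rw [h₂.finrank_span, h₁.finrank_span, add_assoc], fun i hi => ?_, fun i hi hiX => ?_,
    by rw [hcount]; push_cast; omega, by rw [hcount]; omega⟩
  · exact (apply_eq_zero_iff_of_sign_eq hx i).2
      ⟨h₂.apply_eq_zero i (h₁.subset hi), h₁.apply_eq_zero i hi⟩
  · rw [Ne, apply_eq_zero_iff_of_sign_eq hx]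
    rintro ⟨hβ, hα⟩
    exact h₁.apply_ne_zero i (hzeros ▸ mem_filter.2 ⟨hi, hβ⟩) hiX hα

theorem exists_isDiscExtension_one [FiniteDimensional ℝ F] (hX : LinClosed V X)
    (hrank : finrank ℝ (span ℝ (V '' X)) < confRank V) : ∃ Y β, IsDiscExtension V X Y β 1 := by
  obtain ⟨j, hj, γ, hγ, hmin, hle⟩ := exists_closureInsert_le hX hrank
  set Y := closureInsert V X j
  obtain ⟨β, hβ, hβY⟩ : ∃ β : F →ₗ[ℝ] ℝ,
      (∀ i, β (V i) = 0 ↔ i ∈ X) ∧ signedCount β V Y = |signedCount γ V Y| := by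
    rcases le_or_gt 0 (signedCount γ V Y) with h | h
    · exact ⟨γ, hγ, (abs_of_nonneg h).symm⟩
    · exact ⟨-γ, by simpa using hγ, by rw [signedCount_neg, abs_of_neg h]⟩
  exact ⟨Y, β, subset_closureInsert j, linClosed_closureInsert j, finrank_closureInsert hj,
    fun i hi => (hβ i).2 hi, fun i _ hi => mt (hβ i).1 hi, by rw [hβY]; exact_mod_cast hmin,
    hβY ▸ hle⟩

theorem exists_isDiscExtension [FiniteDimensional ℝ F] (hX : LinClosed V X) :
    ∀ s, finrank ℝ (span ℝ (V '' X)) + s ≤ confRank V → ∃ Y α, IsDiscExtension V X Y α s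
  | 0, _ => ⟨X, 0, .refl hX⟩
  | s + 1, hs => by
    obtain ⟨Y, α, h⟩ := exists_isDiscExtension hX s (by omega)
    obtain ⟨Z, β, h'⟩ := exists_isDiscExtension_one h.linClosed (by rw [h.finrank_span]; omega)
    obtain ⟨γ, hγ⟩ := h.trans h'
    exact ⟨Z, γ, hγ⟩

end VectorConfig

open VectorConfig

theorem exists_extremal_subfam_with_disc_general {E : Type*} [AddCommGroup E] [Module ℝ E]
    [FiniteDimensional ℝ E]
    {ι : Type*} [Fintype ι] (V : ι → E) (s : ℕ)
    (hs2 : s ≤ confRank V - 1) :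
    ∃ S : Finset ι, LinClosed V S ∧ confRank (subfam V S) = s ∧
      disc V = disc (subfam V S) + disc (contract V S) ∧
      min (disc V) s ≤ disc (subfam V S) := by
  set X₀ := univ.filter fun i => V i = 0
  have hX₀ : ∀ i ∈ X₀, V i = 0 := fun i hi => (mem_filter.1 hi).2
  have hspan : span ℝ (V '' X₀) = ⊥ := by
    rw [eq_bot_iff, span_le]
    rintro _ ⟨i, hi, rfl⟩
    simp [hX₀ i hi]
  have hclosed : LinClosed V X₀ := fun i hi => by
    rw [hspan, Submodule.mem_bot] at hi
    simpa [X₀] using hi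
  obtain ⟨S, α, h⟩ := exists_isDiscExtension hclosed s (by rw [hspan, finrank_bot]; omega)
  have hsub := signedCount_le_relDisc (V := V) (X := ∅) (φ := α) (by simp) S
  have hsuper := relDisc_add_relDisc_le (empty_subset S) h.linClosed
  have hmin := h.min_le
  have hle := h.le_add
  rw [relDisc_eq_relDisc_empty hX₀] at hmin hle
  refine ⟨S, h.linClosed, by rw [confRank_subfam, h.finrank_span, hspan, finrank_bot, zero_add],
    ?_, ?_⟩
  · rw [disc_eq_relDisc, disc_subfam, disc_contract]
    omega
  · rw [disc_eq_relDisc, disc_subfam]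
    omega

/-- for every `1 ≤ s ≤ r − 1` there is a linearly closed subfamily `W` of
rank `s` with `disc V = disc W + disc (V/W)` and `disc W ≥ min (disc V) s`. -/
theorem exists_extremal_subfam_with_disc {E : Type*} [AddCommGroup E] [Module ℝ E]
    [FiniteDimensional ℝ E] (hE : 1 ≤ Module.finrank ℝ E)
    {ι : Type*} [Fintype ι] (V : ι → E) (s : ℕ)
    (hs1 : 1 ≤ s) (hs2 : s ≤ confRank V - 1) :
    ∃ S : Finset ι, LinClosed V S ∧ confRank (subfam V S) = s ∧
      disc V = disc (subfam V S) + disc (contract V S) ∧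
      min (disc V) s ≤ disc (subfam V S) :=
  exists_extremal_subfam_with_disc_general V s hs2

end
end

section
/- Let A be a finite set of at least 3 points in the real plane ℝ² and let a ∈ A. If the points of A ∖ {a} are not all contained in a single affine line, then there exists an affine line L in ℝ² such that a ∉ L and L contains exactly two points of A. -/
/-!
Apply a projective transformation sending `a` to the vertical point at infinity:
lines through `a` become vertical, so it suffices to find a non-vertical ordinary line of the
image of `A ∖ {a}`.

For that, run Kelly's argument with vertical instead of Euclidean distance. Pick a point `p` and
a non-vertical spanned line `ℓ₀` at minimal vertical distance. If no non-vertical line is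
ordinary, `ℓ₀` carries the vertical foot `f` of `p` and exactly one point on each side of it.
The same then holds for `f` (resp. `p`) and every non-vertical line through `p` (resp. `f`), so
each point `w` off the vertical through `p` has a partner on the line `p w` on the other side
of `p`, and one on the line `f w` on the other side of `f`. Measuring heights above `ℓ₀` in
units of the height of `p`, the first pairing injects heights `< 1` into heights `> 1`, the
second injects heights `> 0` into heights `< 0`; a point of `ℓ₀` other than `f`, of height
`0`, makes these counts inconsistent.
-/

open scoped Classical

open Finset

namespace SylvesterGallai

/-- The line `y = k * x + c` is encoded as `ℓ = (k, c)`, and `vgap ℓ x` is the signed vertical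
offset of `x` from it. -/
def vgap (ℓ x : ℝ × ℝ) : ℝ := x.2 - (ℓ.1 * x.1 + ℓ.2)

lemma vgap_sub_vgap {ℓ m x y : ℝ × ℝ} (hx : vgap m x = 0) (hy : vgap m y = 0) :
    vgap ℓ y - vgap ℓ x = (m.1 - ℓ.1) * (y.1 - x.1) := by
  unfold vgap at *
  linear_combination hy - hx

lemma vgap_sub_mul_eq {ℓ m x y w : ℝ × ℝ} (hx : vgap m x = 0) (hy : vgap m y = 0)
    (hw : vgap m w = 0) :
    (vgap ℓ y - vgap ℓ x) * (w.1 - x.1) = (vgap ℓ w - vgap ℓ x) * (y.1 - x.1) := by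
  rw [vgap_sub_vgap hx hy, vgap_sub_vgap hx hw]
  ring

lemma eq_of_vgap_eq_zero_of_fst_eq {ℓ x y : ℝ × ℝ} (hx : vgap ℓ x = 0) (hy : vgap ℓ y = 0)
    (h : x.1 = y.1) : x = y := by
  unfold vgap at hx hy
  exact Prod.ext h (by rw [h] at hx; linarith)

noncomputable def lineThrough (u v : ℝ × ℝ) : ℝ × ℝ :=
  ((v.2 - u.2) / (v.1 - u.1), u.2 - (v.2 - u.2) / (v.1 - u.1) * u.1)

lemma vgap_lineThrough_left (u v : ℝ × ℝ) : vgap (lineThrough u v) u = 0 := by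
  simp [vgap, lineThrough]

lemma vgap_lineThrough_right {u v : ℝ × ℝ} (h : u.1 ≠ v.1) : vgap (lineThrough u v) v = 0 := by
  have : v.1 - u.1 ≠ 0 := sub_ne_zero.2 h.symm
  simp only [vgap, lineThrough]
  field_simp
  ring

lemma eq_lineThrough {ℓ u v : ℝ × ℝ} (h : u.1 ≠ v.1) (hu : vgap ℓ u = 0) (hv : vgap ℓ v = 0) :
    ℓ = lineThrough u v := by
  have hslope : ℓ.1 = (v.2 - u.2) / (v.1 - u.1) := by
    rw [eq_div_iff (sub_ne_zero.2 h.symm)]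
    unfold vgap at hu hv
    linarith
  unfold vgap at hu
  exact Prod.ext hslope (by simp only [lineThrough, ← hslope]; linarith)

noncomputable def spannedLines (C : Finset (ℝ × ℝ)) : Finset (ℝ × ℝ) :=
  ((C ×ˢ C).filter fun uv => uv.1.1 ≠ uv.2.1).image fun uv => lineThrough uv.1 uv.2

lemma mem_spannedLines {C : Finset (ℝ × ℝ)} {ℓ : ℝ × ℝ} :
    ℓ ∈ spannedLines C ↔
      ∃ u ∈ C, ∃ v ∈ C, u.1 ≠ v.1 ∧ vgap ℓ u = 0 ∧ vgap ℓ v = 0 := by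
  simp only [spannedLines, mem_image, mem_filter, mem_product]
  constructor
  · rintro ⟨⟨u, v⟩, ⟨⟨hu, hv⟩, huv⟩, rfl⟩
    exact ⟨u, hu, v, hv, huv, vgap_lineThrough_left u v, vgap_lineThrough_right huv⟩
  · rintro ⟨u, hu, v, hv, huv, hℓu, hℓv⟩
    exact ⟨(u, v), ⟨⟨hu, hv⟩, huv⟩, (eq_lineThrough huv hℓu hℓv).symm⟩

def IsMinimalPair (C : Finset (ℝ × ℝ)) (q ℓ : ℝ × ℝ) : Prop :=
  q ∈ C ∧ ℓ ∈ spannedLines C ∧ vgap ℓ q ≠ 0 ∧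
    ∀ q' ∈ C, ∀ ℓ' ∈ spannedLines C, vgap ℓ' q' ≠ 0 → |vgap ℓ q| ≤ |vgap ℓ' q'|

lemma exists_isMinimalPair {C : Finset (ℝ × ℝ)}
    (h : ∃ q ∈ C, ∃ ℓ ∈ spannedLines C, vgap ℓ q ≠ 0) : ∃ q ℓ, IsMinimalPair C q ℓ := by
  obtain ⟨q, hq, ℓ, hℓ, hqℓ⟩ := h
  obtain ⟨⟨q₀, ℓ₀⟩, h₀, hmin⟩ :=
    ((C ×ˢ spannedLines C).filter fun t => vgap t.2 t.1 ≠ 0).exists_min_image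
      (fun t => |vgap t.2 t.1|) ⟨(q, ℓ), by simp [hq, hℓ, hqℓ]⟩
  simp only [mem_filter, mem_product] at h₀
  exact ⟨q₀, ℓ₀, h₀.1.1, h₀.1.2, h₀.2,
    fun q' hq' ℓ' hℓ' h' => hmin (q', ℓ') (by simp [hq', hℓ', h'])⟩

lemma abs_sub_lt_of_mul_pos {a b : ℝ} (hab : 0 < a * b) (h : |a| < |b|) : |a - b| < |b| := by
  rcases lt_or_gt_of_ne (left_ne_zero_of_mul hab.ne') with ha | ha
  · have hb : b < 0 := by nlinarith
    rw [abs_of_neg ha, abs_of_neg hb] at h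
    rw [abs_of_neg hb, abs_of_pos (by linarith)]
    linarith
  · have hb : 0 < b := by nlinarith
    rw [abs_of_pos ha, abs_of_pos hb] at h
    rw [abs_of_pos hb, abs_of_neg (by linarith)]
    linarith

lemma pos_of_mul_eq_mul {a b s t : ℝ} (h : a * s = b * t) (hb : b < 0) (hts : t * s < 0) :
    0 < a := by
  have : 0 < a * (s * s) := by
    rw [show a * (s * s) = b * (t * s) by linear_combination s * h]
    exact mul_pos_of_neg_of_neg hb hts
  exact pos_of_mul_pos_left this (mul_self_nonneg s)

namespace IsMinimalPair

variable {C : Finset (ℝ × ℝ)} {q ℓ : ℝ × ℝ}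

lemma of_abs_eq {q' ℓ' : ℝ × ℝ} (h : IsMinimalPair C q ℓ) (hq' : q' ∈ C)
    (hℓ' : ℓ' ∈ spannedLines C) (heq : |vgap ℓ' q'| = |vgap ℓ q|) : IsMinimalPair C q' ℓ' := by
  obtain ⟨-, -, hqℓ, hmin⟩ := h
  refine ⟨hq', hℓ', fun h0 => hqℓ (abs_eq_zero.1 ?_), fun q'' hq'' ℓ'' hℓ'' h'' => ?_⟩
  · rw [← heq, h0, abs_zero]
  · rw [heq]
    exact hmin q'' hq'' ℓ'' hℓ'' h''

/-- Kelly's step: if `w` lay strictly between the vertical foot of `q` on `ℓ` and `w'`, then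
`w` would be closer to the line `q w'` than `q` is to `ℓ`. -/
lemma eq_of_same_side {w w' : ℝ × ℝ} (h : IsMinimalPair C q ℓ) (hw : w ∈ C) (hw' : w' ∈ C)
    (hwℓ : vgap ℓ w = 0) (hw'ℓ : vgap ℓ w' = 0) (hside : 0 < (w.1 - q.1) * (w'.1 - q.1)) :
    w = w' := by
  obtain ⟨hq, -, hqℓ, hmin⟩ := h
  have not_nearer : ∀ w w', w ∈ C → w' ∈ C → vgap ℓ w = 0 → vgap ℓ w' = 0 →
      0 < (w.1 - q.1) * (w'.1 - q.1) → ¬ |w.1 - q.1| < |w'.1 - q.1| := by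
    intro w w' hw hw' hwℓ hw'ℓ hside hlt
    have hqw' : q.1 ≠ w'.1 := fun h => by simp [h] at hside
    set m := lineThrough q w'
    have hmq : vgap m q = 0 := vgap_lineThrough_left q w'
    have hmw' : vgap m w' = 0 := vgap_lineThrough_right hqw'
    have hmw : vgap m w = (ℓ.1 - m.1) * (w.1 - w'.1) := by
      simpa [hmw'] using vgap_sub_vgap (ℓ := m) hw'ℓ hwℓ
    have hℓq : vgap ℓ q = (m.1 - ℓ.1) * (q.1 - w'.1) := by
      simpa [hw'ℓ] using vgap_sub_vgap (ℓ := ℓ) hmw' hmq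
    have hslope : m.1 - ℓ.1 ≠ 0 := fun h0 => hqℓ (by rw [hℓq, h0, zero_mul])
    have hww' : w.1 - w'.1 ≠ 0 := fun h0 => by
      rw [show w.1 - q.1 = w'.1 - q.1 by linarith] at hlt
      exact lt_irrefl _ hlt
    have hle := hmin w hw m (mem_spannedLines.2 ⟨q, hq, w', hw', hqw', hmq, hmw'⟩)
      (by rw [hmw]; exact mul_ne_zero (by rwa [← neg_sub, neg_ne_zero]) hww')
    rw [hℓq, hmw, abs_mul, abs_mul, abs_sub_comm ℓ.1] at hle
    have hfar : |q.1 - w'.1| ≤ |w.1 - w'.1| := le_of_mul_le_mul_left hle (abs_pos.2 hslope)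
    have hnear := abs_sub_lt_of_mul_pos hside hlt
    rw [sub_sub_sub_cancel_right, abs_sub_comm w'.1] at hnear
    linarith
  rcases lt_trichotomy |w.1 - q.1| |w'.1 - q.1| with hlt | heq | hgt
  · exact absurd hlt (not_nearer w w' hw hw' hwℓ hw'ℓ hside)
  · refine eq_of_vgap_eq_zero_of_fst_eq hwℓ hw'ℓ ?_
    rcases abs_eq_abs.1 heq with h' | h'
    · linarith
    · nlinarith
  · exact absurd hgt (not_nearer w' w hw' hw hw'ℓ hwℓ (by rwa [mul_comm]))

lemma sides_nonempty (h : IsMinimalPair C q ℓ) (h3 : 3 ≤ #(C.filter fun x => vgap ℓ x = 0)) :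
    (∃ x ∈ C, vgap ℓ x = 0 ∧ x.1 < q.1) ∧ (∃ x ∈ C, vgap ℓ x = 0 ∧ x.1 = q.1) ∧
      (∃ x ∈ C, vgap ℓ x = 0 ∧ q.1 < x.1) := by
  set S := C.filter fun x => vgap ℓ x = 0
  have hS : ∀ x ∈ S, x ∈ C ∧ vgap ℓ x = 0 := fun x hx => mem_filter.1 hx
  have hlt : #(S.filter (·.1 < q.1)) ≤ 1 := card_le_one.2 fun x hx y hy => by
    rw [mem_filter] at hx hy
    exact h.eq_of_same_side (hS x hx.1).1 (hS y hy.1).1 (hS x hx.1).2 (hS y hy.1).2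
      (mul_pos_of_neg_of_neg (by linarith [hx.2]) (by linarith [hy.2]))
  have heq : #(S.filter (·.1 = q.1)) ≤ 1 := card_le_one.2 fun x hx y hy => by
    rw [mem_filter] at hx hy
    exact eq_of_vgap_eq_zero_of_fst_eq (hS x hx.1).2 (hS y hy.1).2 (hx.2.trans hy.2.symm)
  have hgt : #(S.filter (q.1 < ·.1)) ≤ 1 := card_le_one.2 fun x hx y hy => by
    rw [mem_filter] at hx hy
    exact h.eq_of_same_side (hS x hx.1).1 (hS y hy.1).1 (hS x hx.1).2 (hS y hy.1).2
      (mul_pos (by linarith [hx.2]) (by linarith [hy.2]))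
  have hsplit : #S ≤ #(S.filter (·.1 < q.1)) + #(S.filter (·.1 = q.1)) +
      #(S.filter (q.1 < ·.1)) := by
    have hcover : S ⊆ S.filter (·.1 < q.1) ∪ S.filter (·.1 = q.1) ∪ S.filter (q.1 < ·.1) := by
      intro x hx
      simp only [mem_union, mem_filter]
      rcases lt_trichotomy x.1 q.1 with h' | h' | h' <;> simp [hx, h']
    linarith [card_le_card hcover, card_union_le (S.filter (·.1 < q.1) ∪ S.filter (·.1 = q.1))
      (S.filter (q.1 < ·.1)), card_union_le (S.filter (·.1 < q.1)) (S.filter (·.1 = q.1))]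
  have exists_of_card_pos {P : ℝ × ℝ → Prop} (hT : 0 < #(S.filter P)) :
      ∃ x ∈ C, vgap ℓ x = 0 ∧ P x := by
    obtain ⟨x, hx⟩ := card_pos.1 hT
    rw [mem_filter] at hx
    exact ⟨x, (hS x hx.1).1, (hS x hx.1).2, hx.2⟩
  exact ⟨exists_of_card_pos (by omega), exists_of_card_pos (by omega),
    exists_of_card_pos (by omega)⟩

lemma exists_opposite {w : ℝ × ℝ} (h : IsMinimalPair C q ℓ)
    (h3 : 3 ≤ #(C.filter fun x => vgap ℓ x = 0)) (hwx : w.1 ≠ q.1) :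
    ∃ w' ∈ C, vgap ℓ w' = 0 ∧ (w'.1 - q.1) * (w.1 - q.1) < 0 := by
  obtain ⟨⟨x, hx, hxℓ, hxq⟩, -, ⟨y, hy, hyℓ, hyq⟩⟩ := h.sides_nonempty h3
  rcases lt_or_gt_of_ne hwx with hw | hw
  · exact ⟨y, hy, hyℓ, mul_neg_of_pos_of_neg (by linarith) (by linarith)⟩
  · exact ⟨x, hx, hxℓ, mul_neg_of_neg_of_pos (by linarith) (by linarith)⟩

/-- The vertical distance from `o'` to any line through `o` is `|o'.2 - o.2|`. -/
lemma isMinimalPair_lineThrough {o o' w : ℝ × ℝ} (h : IsMinimalPair C q ℓ) (ho : o ∈ C)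
    (ho' : o' ∈ C) (hx : o'.1 = o.1) (hd : |o'.2 - o.2| = |vgap ℓ q|) (hw : w ∈ C)
    (hwx : w.1 ≠ o.1) : IsMinimalPair C o' (lineThrough o w) := by
  have hmo := vgap_lineThrough_left o w
  refine h.of_abs_eq ho' (mem_spannedLines.2 ⟨o, ho, w, hw, hwx.symm, hmo,
    vgap_lineThrough_right hwx.symm⟩) ?_
  rw [← hd]
  unfold vgap at hmo ⊢
  rw [hx]
  congr 1
  linarith

/-- Each `w` has a unique partner on the line `o w` on the other side of `o`, so sending `w` to
its partner is injective. -/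
lemma card_filter_le_of_partner {o o' : ℝ × ℝ} (h : IsMinimalPair C q ℓ)
    (h3 : ∀ m ∈ spannedLines C, 3 ≤ #(C.filter fun x => vgap m x = 0)) (ho : o ∈ C)
    (ho' : o' ∈ C) (hx : o'.1 = o.1) (hd : |o'.2 - o.2| = |vgap ℓ q|) (P Q : ℝ × ℝ → Prop)
    (hPQ : ∀ w w', P w → vgap (lineThrough o w) w' = 0 → (w'.1 - o.1) * (w.1 - o.1) < 0 → Q w') :
    #(C.filter fun w => w.1 ≠ o.1 ∧ P w) ≤ #(C.filter fun w => w.1 ≠ o.1 ∧ Q w) := by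
  have hmin : ∀ w ∈ C, w.1 ≠ o.1 → IsMinimalPair C o' (lineThrough o w) :=
    fun w hw hwx => h.isMinimalPair_lineThrough ho ho' hx hd hw hwx
  have hpartner : ∀ w ∈ C.filter (fun w => w.1 ≠ o.1 ∧ P w), ∃ w' ∈ C,
      vgap (lineThrough o w) w' = 0 ∧ (w'.1 - o.1) * (w.1 - o.1) < 0 := by
    intro w hw
    rw [mem_filter] at hw
    have hmw := hmin w hw.1 hw.2.1
    rw [← hx]
    exact hmw.exists_opposite (h3 _ hmw.2.1) (by rw [hx]; exact hw.2.1)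
  choose! partner hpC hpm hps using hpartner
  have hpx : ∀ w ∈ C.filter (fun w => w.1 ≠ o.1 ∧ P w), (partner w).1 ≠ o.1 :=
    fun w hw h0 => by simpa [h0] using hps w hw
  refine card_le_card_of_injOn partner (fun w hw => ?_) (fun w₁ hw₁ w₂ hw₂ heq => ?_)
  · exact mem_filter.2 ⟨hpC w hw, hpx w hw, hPQ w _ (mem_filter.1 hw).2.2 (hpm w hw) (hps w hw)⟩
  · have hline : ∀ w ∈ C.filter (fun w => w.1 ≠ o.1 ∧ P w), partner w = partner w₁ →
        lineThrough o w = lineThrough o (partner w₁) := fun w hw hwy =>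
      eq_lineThrough (hpx w₁ hw₁).symm (vgap_lineThrough_left o w) (hwy ▸ hpm w hw)
    have hw₁' := mem_filter.1 hw₁
    have hw₂' := mem_filter.1 hw₂
    have hside₁ := hps w₁ hw₁
    have hside₂ := hps w₂ hw₂
    rw [heq] at hside₁
    refine (hmin w₁ hw₁'.1 hw₁'.2.1).eq_of_same_side hw₁'.1 hw₂'.1
      (vgap_lineThrough_right (Ne.symm hw₁'.2.1)) ?_ ?_
    · rw [hline w₁ hw₁ rfl, ← hline w₂ hw₂ heq.symm]
      exact vgap_lineThrough_right (Ne.symm hw₂'.2.1)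
    · rw [hx]
      have hprod := mul_pos_of_neg_of_neg hside₁ hside₂
      rw [show ((partner w₂).1 - o.1) * (w₁.1 - o.1) * (((partner w₂).1 - o.1) * (w₂.1 - o.1)) =
        ((partner w₂).1 - o.1) * ((partner w₂).1 - o.1) * ((w₁.1 - o.1) * (w₂.1 - o.1))
        by ring] at hprod
      exact pos_of_mul_pos_right hprod (mul_self_nonneg _)

end IsMinimalPair

theorem exists_nonvertical_ordinary_line (C : Finset (ℝ × ℝ))
    (hC : ∃ q ∈ C, ∃ ℓ ∈ spannedLines C, vgap ℓ q ≠ 0) :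
    ∃ ℓ, #(C.filter fun x => vgap ℓ x = 0) = 2 := by
  by_contra! hno
  have h3 : ∀ ℓ ∈ spannedLines C, 3 ≤ #(C.filter fun x => vgap ℓ x = 0) := by
    intro ℓ hℓ
    obtain ⟨u, hu, v, hv, huv, huℓ, hvℓ⟩ := mem_spannedLines.1 hℓ
    have : 1 < #(C.filter fun x => vgap ℓ x = 0) := one_lt_card.2
      ⟨u, mem_filter.2 ⟨hu, huℓ⟩, v, mem_filter.2 ⟨hv, hvℓ⟩, fun h => huv (congrArg Prod.fst h)⟩
    have := hno ℓ
    omega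
  obtain ⟨p, ℓ₀, hmin⟩ := exists_isMinimalPair hC
  obtain ⟨⟨z, hz, hzℓ, hzp⟩, ⟨f, hf, hfℓ, hfp⟩, -⟩ := hmin.sides_nonempty (h3 _ hmin.2.1)
  set e := vgap ℓ₀ p
  have he : e ≠ 0 := hmin.2.2.1
  have hfe : f.2 - p.2 = -e := by unfold e vgap at *; rw [hfp] at hfℓ; linarith
  -- The signs of `vgap ℓ₀ w * e` and `(vgap ℓ₀ w - e) * e` compare the height of `w` with
  -- those of `f` and `p`.
  have hviap : #(C.filter fun w => w.1 ≠ p.1 ∧ (vgap ℓ₀ w - e) * e < 0) ≤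
      #(C.filter fun w => w.1 ≠ p.1 ∧ 0 < (vgap ℓ₀ w - e) * e) :=
    hmin.card_filter_le_of_partner h3 hmin.1 hf hfp (by rw [hfe, abs_neg]) _ _
      fun w w' hw hw' hside => pos_of_mul_eq_mul (by
        linear_combination e * vgap_sub_mul_eq (ℓ := ℓ₀) (vgap_lineThrough_left p w) hw'
          (vgap_lineThrough_right fun h0 => by simp [h0] at hside)) hw hside
  have hviaf : #(C.filter fun w => w.1 ≠ p.1 ∧ 0 < vgap ℓ₀ w * e) ≤
      #(C.filter fun w => w.1 ≠ p.1 ∧ vgap ℓ₀ w * e < 0) := by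
    rw [← hfp]
    refine hmin.card_filter_le_of_partner h3 hf hmin.1 hfp.symm
      (by rw [← neg_sub, hfe, neg_neg]) _ _ fun w w' hw hw' hside => neg_pos.1 ?_
    refine pos_of_mul_eq_mul (b := -(vgap ℓ₀ w * e)) ?_ (neg_neg_of_pos hw) hside
    linear_combination -e * vgap_sub_mul_eq (ℓ := ℓ₀) (vgap_lineThrough_left f w) hw'
      (vgap_lineThrough_right fun h0 => by simp [h0] at hside) + (w'.1 - w.1) * e * hfℓ
  have hlt : #(C.filter fun w => w.1 ≠ p.1 ∧ vgap ℓ₀ w * e < 0) <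
      #(C.filter fun w => w.1 ≠ p.1 ∧ (vgap ℓ₀ w - e) * e < 0) := by
    refine card_lt_card ((ssubset_iff_of_subset (monotone_filter_right _ ?_)).2
      ⟨z, mem_filter.2 ⟨hz, hzp.ne, ?_⟩, fun hz' => ?_⟩)
    · exact fun w _ ⟨hwp, hw⟩ => ⟨hwp, by nlinarith [mul_self_pos.2 he]⟩
    · rw [hzℓ]; nlinarith [mul_self_pos.2 he]
    · have := (mem_filter.1 hz').2.2
      rw [hzℓ, zero_mul] at this
      exact lt_irrefl 0 this
  have hle : #(C.filter fun w => w.1 ≠ p.1 ∧ 0 < (vgap ℓ₀ w - e) * e) ≤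
      #(C.filter fun w => w.1 ≠ p.1 ∧ 0 < vgap ℓ₀ w * e) :=
    card_le_card (monotone_filter_right _ fun w _ ⟨hwp, hw⟩ =>
      ⟨hwp, by nlinarith [mul_self_pos.2 he]⟩)
  omega

lemma collinear_of_forall_eq {s : Set (ℝ × ℝ)} (a : ℝ × ℝ) {α β γ : ℝ}
    (hne : α ≠ 0 ∨ β ≠ 0 ∨ γ ≠ 0) (hs : ∀ x ∈ s, α * (x.1 - a.1) + β * (x.2 - a.2) = γ) :
    Collinear ℝ s := by
  rw [collinear_iff_exists_forall_eq_smul_vadd]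
  rcases ne_or_eq α 0 with hα | hα
  · refine ⟨(a.1 + γ / α, a.2), (-β, α), fun x hx => ⟨(x.2 - a.2) / α, ?_⟩⟩
    have := hs x hx
    ext <;> simp <;> field_simp <;> linarith
  rcases ne_or_eq β 0 with hβ | hβ
  · refine ⟨(a.1, a.2 + γ / β), (β, -α), fun x hx => ⟨(x.1 - a.1) / β, ?_⟩⟩
    have := hs x hx
    ext <;> simp <;> field_simp <;> linarith
  have hγ : γ ≠ 0 := by simpa [hα, hβ] using hne
  exact ⟨a, 0, fun x hx => absurd (hs x hx) (by simpa [hα, hβ] using hγ.symm)⟩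

lemma eq_of_mem_affineSpan_pair {p q x a : ℝ × ℝ} {α β γ : ℝ} (hx : x ∈ line[ℝ, p, q])
    (hp : α * (p.1 - a.1) + β * (p.2 - a.2) = γ) (hq : α * (q.1 - a.1) + β * (q.2 - a.2) = γ) :
    α * (x.1 - a.1) + β * (x.2 - a.2) = γ := by
  obtain ⟨r, rfl⟩ := mem_affineSpan_pair_iff_exists_lineMap_eq.1 hx
  simp only [AffineMap.lineMap_apply_module', Prod.fst_add, Prod.snd_add, Prod.fst_sub,
    Prod.snd_sub, Prod.smul_fst, Prod.smul_snd, smul_eq_mul]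
  linear_combination (1 - r) * hp + r * hq

def projDenom (a : ℝ × ℝ) (l : ℝ) (x : ℝ × ℝ) : ℝ := (x.2 - a.2) - l * (x.1 - a.1)

/-- A projective transformation sending `a` to the vertical point at infinity and the line
through `a` of slope `l` to the line at infinity: lines through `a` become vertical, all other
lines non-vertical. -/
noncomputable def projMap (a : ℝ × ℝ) (l : ℝ) (x : ℝ × ℝ) : ℝ × ℝ :=
  ((x.1 - a.1) / projDenom a l x, 1 / projDenom a l x)

lemma exists_projDenom_ne_zero (a : ℝ × ℝ) (B : Finset (ℝ × ℝ)) (ha : a ∉ B) :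
    ∃ l, ∀ x ∈ B, projDenom a l x ≠ 0 := by
  obtain ⟨l, hl⟩ := Infinite.exists_notMem_finset (B.image fun x => (x.2 - a.2) / (x.1 - a.1))
  refine ⟨l, fun x hx h0 => ?_⟩
  unfold projDenom at h0
  rcases eq_or_ne (x.1 - a.1) 0 with h1 | h1
  · rw [h1, mul_zero, sub_zero, sub_eq_zero] at h0
    exact ha (by rwa [show a = x from Prod.ext (by linarith) h0.symm])
  · exact hl (mem_image.2 ⟨x, hx, by rw [div_eq_iff h1]; linarith⟩)

variable {a : ℝ × ℝ} {l : ℝ}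

lemma projMap_fst_mul {x : ℝ × ℝ} (hx : projDenom a l x ≠ 0) :
    (projMap a l x).1 * projDenom a l x = x.1 - a.1 := by
  simp [projMap, hx]

lemma vgap_projMap_mul (ℓ : ℝ × ℝ) {x : ℝ × ℝ} (hx : projDenom a l x ≠ 0) :
    vgap ℓ (projMap a l x) * projDenom a l x =
      1 - (ℓ.1 * (x.1 - a.1) + ℓ.2 * projDenom a l x) := by
  simp only [vgap, projMap]
  field_simp

lemma projMap_injOn : Set.InjOn (projMap a l) {x | projDenom a l x ≠ 0} := by
  intro x hx y hy hxy
  have h2 : projDenom a l x = projDenom a l y := by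
    simpa [projMap] using congrArg Prod.snd hxy
  have h1 : x.1 = y.1 := by
    have := projMap_fst_mul hx
    rw [hxy, h2, projMap_fst_mul hy] at this
    linarith
  refine Prod.ext h1 ?_
  unfold projDenom at h2
  rw [h1] at h2
  linarith

lemma exists_vgap_ne_zero_of_not_collinear {B : Finset (ℝ × ℝ)} (hY : ∀ x ∈ B, projDenom a l x ≠ 0)
    (hB : ¬ Collinear ℝ (B : Set (ℝ × ℝ))) :
    ∃ q ∈ B.image (projMap a l), ∃ ℓ ∈ spannedLines (B.image (projMap a l)), vgap ℓ q ≠ 0 := by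
  by_contra! h
  apply hB
  by_cases hvert : ∃ u ∈ B, ∃ v ∈ B, (projMap a l u).1 ≠ (projMap a l v).1
  · obtain ⟨u, hu, v, hv, huv⟩ := hvert
    set ℓ := lineThrough (projMap a l u) (projMap a l v)
    have hℓ : ℓ ∈ spannedLines (B.image (projMap a l)) :=
      mem_spannedLines.2 ⟨_, mem_image_of_mem _ hu, _, mem_image_of_mem _ hv, huv,
        vgap_lineThrough_left _ _, vgap_lineThrough_right huv⟩
    refine collinear_of_forall_eq a (α := ℓ.1 - ℓ.2 * l) (β := ℓ.2) (γ := 1) (by simp)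
      fun x hx => ?_
    have := vgap_projMap_mul ℓ (hY x hx)
    rw [h _ (mem_image_of_mem _ hx) ℓ hℓ, zero_mul] at this
    unfold projDenom at this
    linear_combination this
  · push Not at hvert
    obtain ⟨u, hu⟩ : B.Nonempty :=
      nonempty_iff_ne_empty.2 fun hB' => hB (by simp [hB', collinear_empty])
    set t := (projMap a l u).1
    refine collinear_of_forall_eq a (α := 1 + t * l) (β := -t) (γ := 0) ?_ fun x hx => ?_
    · rcases eq_or_ne t 0 with ht | ht
      · left; simp [ht]
      · right; left; simpa using ht
    · have := projMap_fst_mul (hY x hx)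
      rw [hvert x hx u hu] at this
      unfold projDenom at this
      linear_combination -this

lemma exists_ordinary_line_of_projMap {A : Finset (ℝ × ℝ)} {ℓ : ℝ × ℝ}
    (hY : ∀ x ∈ A.erase a, projDenom a l x ≠ 0)
    (hℓ : #(((A.erase a).image (projMap a l)).filter fun y => vgap ℓ y = 0) = 2) :
    ∃ b₁ b₂, b₁ ≠ b₂ ∧ a ∉ line[ℝ, b₁, b₂] ∧ A.filter (· ∈ line[ℝ, b₁, b₂]) = {b₁, b₂} := by
  have on_iff : ∀ x ∈ A.erase a, vgap ℓ (projMap a l x) = 0 ↔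
      (ℓ.1 - ℓ.2 * l) * (x.1 - a.1) + ℓ.2 * (x.2 - a.2) = 1 := by
    intro x hx
    have := vgap_projMap_mul ℓ (hY x hx)
    unfold projDenom at this
    constructor
    · intro h0
      rw [h0, zero_mul] at this
      linear_combination this
    · intro h1
      refine (mul_eq_zero.1 (this.trans ?_)).resolve_right (hY x hx)
      linear_combination -h1
  obtain ⟨q₁, q₂, hq, hfilt⟩ := card_eq_two.1 hℓ
  have hmem : ∀ q ∈ ({q₁, q₂} : Finset (ℝ × ℝ)), ∃ b ∈ A.erase a, projMap a l b = q ∧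
      (ℓ.1 - ℓ.2 * l) * (b.1 - a.1) + ℓ.2 * (b.2 - a.2) = 1 := by
    intro q hq
    rw [← hfilt, mem_filter, mem_image] at hq
    obtain ⟨⟨b, hb, rfl⟩, hbℓ⟩ := hq
    exact ⟨b, hb, rfl, (on_iff b hb).1 hbℓ⟩
  obtain ⟨b₁, hb₁, rfl, hφ₁⟩ := hmem q₁ (by simp)
  obtain ⟨b₂, hb₂, rfl, hφ₂⟩ := hmem q₂ (by simp)
  have hφ : ∀ x ∈ line[ℝ, b₁, b₂], (ℓ.1 - ℓ.2 * l) * (x.1 - a.1) + ℓ.2 * (x.2 - a.2) = 1 :=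
    fun x hx => eq_of_mem_affineSpan_pair hx hφ₁ hφ₂
  have ha : a ∉ line[ℝ, b₁, b₂] := fun ha => by simpa using hφ a ha
  refine ⟨b₁, b₂, fun h => hq (congrArg _ h), ha, ?_⟩
  ext x
  simp only [mem_filter, mem_insert, mem_singleton]
  constructor
  · rintro ⟨hxA, hxL⟩
    have hx : x ∈ A.erase a := mem_erase.2 ⟨fun h => ha (h ▸ hxL), hxA⟩
    have hxq : projMap a l x ∈ ({projMap a l b₁, projMap a l b₂} : Finset (ℝ × ℝ)) := by
      rw [← hfilt]
      exact mem_filter.2 ⟨mem_image_of_mem _ hx, (on_iff x hx).2 (hφ x hxL)⟩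
    simp only [mem_insert, mem_singleton] at hxq
    exact hxq.imp (projMap_injOn (hY x hx) (hY b₁ hb₁)) (projMap_injOn (hY x hx) (hY b₂ hb₂))
  · rintro (rfl | rfl)
    · exact ⟨mem_of_mem_erase hb₁, left_mem_affineSpan_pair ℝ _ _⟩
    · exact ⟨mem_of_mem_erase hb₂, right_mem_affineSpan_pair ℝ _ _⟩

end SylvesterGallai

theorem exists_ordinary_line_avoiding_point_general (A : Finset (ℝ × ℝ)) (a : ℝ × ℝ)
    (hline : ¬ Collinear ℝ (↑(A.erase a) : Set (ℝ × ℝ))) :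
    ∃ L : AffineSubspace ℝ (ℝ × ℝ), Module.finrank ℝ L.direction = 1 ∧
      a ∉ L ∧ (A.filter fun p => p ∈ L).card = 2 := by
  obtain ⟨l, hY⟩ := SylvesterGallai.exists_projDenom_ne_zero a (A.erase a) (notMem_erase a A)
  obtain ⟨ℓ, hℓ⟩ := SylvesterGallai.exists_nonvertical_ordinary_line _
    (SylvesterGallai.exists_vgap_ne_zero_of_not_collinear hY hline)
  obtain ⟨b₁, b₂, hb, haL, hfilt⟩ := SylvesterGallai.exists_ordinary_line_of_projMap hY hℓ
  refine ⟨line[ℝ, b₁, b₂], ?_, haL, by rw [hfilt, card_pair hb]⟩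
  rw [direction_affineSpan, vectorSpan_pair]
  exact finrank_span_singleton (vsub_ne_zero.2 hb)

/-- sharp Sylvester–Gallai variant: if `A` is a finite set of at least 3
points in the real plane, `a ∈ A`, and the points of `A ∖ {a}` are not all collinear,
then there is an affine line avoiding `a` that contains exactly two points of `A`. -/
theorem exists_ordinary_line_avoiding_point (A : Finset (ℝ × ℝ)) (a : ℝ × ℝ)
    (hcard : 3 ≤ A.card) (ha : a ∈ A)
    (hline : ¬ Collinear ℝ (↑(A.erase a) : Set (ℝ × ℝ))) :
    ∃ L : AffineSubspace ℝ (ℝ × ℝ), Module.finrank ℝ L.direction = 1 ∧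
      a ∉ L ∧ (A.filter fun p => p ∈ L).card = 2 :=
  exists_ordinary_line_avoiding_point_general A a hline
end
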